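/- arXiv:1911.11810 — 7 statements merged into one kernel-verified Lean document; each statement's English description precedes it below -/
import Mathlib

section
/- Let (τ_j)_{j≥1} be a sequence of independent, identically distributed random variables, each Exponential(1) distributed. Then for every natural number k ≥ 1 and all reals s, t with s ≥ t ≥ 0, P( Σ_{j=1}^k (τ_j − 1) ≥ s + t ) ≤ e^{−st/(k+s+t)} · P( Σ_{j=1}^k (τ_j − 1) ≥ s ). -/
open MeasureTheory ProbabilityTheory Finset

noncomputable def gTail (k : ℕ) (x : ℝ) : ℝ :=
  Real.exp (-x) * ∑ j ∈ Finset.range k, x ^ j / (Nat.factorial j)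

noncomputable def gT (k : ℕ) (x : ℝ) : ℝ := if x ≤ 0 then 1 else gTail k x

lemma gTail_nonneg {k : ℕ} {x : ℝ} (hx : 0 ≤ x) : 0 ≤ gTail k x := by
  refine mul_nonneg (Real.exp_pos _).le (Finset.sum_nonneg fun j _ => ?_)
  positivity

lemma gT_nonneg {k : ℕ} (x : ℝ) : 0 ≤ gT k x := by
  unfold gT
  split
  · norm_num
  · exact gTail_nonneg (le_of_not_ge (by assumption))

lemma measurable_gT (k : ℕ) : Measurable (gT k) := by
  unfold gT gTail
  refine Measurable.ite (measurableSet_le measurable_id measurable_const) measurable_const ?_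
  fun_prop

lemma gT_le {k : ℕ} {x z : ℝ} (hx : 0 < x) (hz : z ≤ x) :
    gT k z ≤ 1 + ∑ j ∈ Finset.range k, x ^ j / (Nat.factorial j) := by
  have hsum : (0:ℝ) ≤ ∑ j ∈ Finset.range k, x ^ j / (Nat.factorial j) :=
    Finset.sum_nonneg fun j _ => by positivity
  unfold gT
  split
  · linarith
  · rename_i h
    push_neg at h
    unfold gTail
    have h1 : Real.exp (-z) ≤ 1 := Real.exp_le_one_iff.2 (by linarith)
    have h2 : (∑ j ∈ Finset.range k, z ^ j / (Nat.factorial j))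
        ≤ ∑ j ∈ Finset.range k, x ^ j / (Nat.factorial j) := by
      refine Finset.sum_le_sum fun j _ => ?_
      gcongr
    have h3 : (0:ℝ) ≤ ∑ j ∈ Finset.range k, z ^ j / (Nat.factorial j) :=
      Finset.sum_nonneg fun j _ => by positivity
    nlinarith

/-- The convolution-step real integral. -/
lemma real_int {k : ℕ} {x : ℝ} (hx : 0 < x) :
    ∫ y in Set.Ici (0:ℝ), Real.exp (-y) * gT k (x - y) = gTail (k+1) x := by
  set f : ℝ → ℝ := fun y => Real.exp (-y) * gT k (x - y) with hf
  have hfmeas : Measurable f :=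
    (Real.measurable_exp.comp measurable_neg).mul
      ((measurable_gT k).comp (measurable_const.sub measurable_id))
  have hIci_congr : ∀ y ∈ Set.Ici x, f y = Real.exp (-y) := by
    intro y hy
    have h0 : x - y ≤ 0 := by simp only [Set.mem_Ici] at hy; linarith
    simp only [hf, gT, if_pos h0, mul_one]
  have hint2 : IntegrableOn f (Set.Ici x) := by
    rw [MeasureTheory.integrableOn_congr_fun hIci_congr measurableSet_Ici]
    exact (integrableOn_Ici_iff_integrableOn_Ioi).2
      (by simpa using exp_neg_integrableOn_Ioi x (by norm_num : (0:ℝ) < 1))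
  have hint1 : IntegrableOn f (Set.Ico 0 x) := by
    refine Measure.integrableOn_of_bounded (M := 1 + ∑ j ∈ Finset.range k, x ^ j / (Nat.factorial j)) ?_ hfmeas.aestronglyMeasurable ?_
    · exact measure_Ico_lt_top.ne
    · refine MeasureTheory.ae_restrict_of_forall_mem measurableSet_Ico ?_
      intro y hy
      obtain ⟨h0, h1⟩ := hy
      have hexp : Real.exp (-y) ≤ 1 := Real.exp_le_one_iff.2 (by linarith)
      have hb := gT_le (k := k) hx (show x - y ≤ x by linarith)
      have hgnn := gT_nonneg (k := k) (x - y)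
      have hsum : (0:ℝ) ≤ ∑ j ∈ Finset.range k, x ^ j / (Nat.factorial j) :=
        Finset.sum_nonneg fun j _ => by positivity
      rw [Real.norm_eq_abs, abs_of_nonneg (mul_nonneg (Real.exp_pos _).le hgnn)]
      nlinarith [(Real.exp_pos (-y)).le]
  have hsplit : Set.Ici (0:ℝ) = Set.Ico 0 x ∪ Set.Ici x := (Set.Ico_union_Ici_eq_Ici hx.le).symm
  have hIci : ∫ y in Set.Ici x, f y = Real.exp (-x) := by
    rw [MeasureTheory.setIntegral_congr_fun measurableSet_Ici hIci_congr,
      MeasureTheory.integral_Ici_eq_integral_Ioi]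
    exact integral_exp_neg_Ioi x
  have hIco : ∫ y in Set.Ico 0 x, f y
      = Real.exp (-x) * ∑ j ∈ Finset.range k, x ^ (j+1) / (Nat.factorial (j+1)) := by
    have hcong : ∀ y ∈ Set.Ico 0 x, f y
        = Real.exp (-x) * ∑ j ∈ Finset.range k, (x - y) ^ j / (Nat.factorial j) := by
      intro y hy
      obtain ⟨h0, h1⟩ := hy
      have hxy : 0 < x - y := by linarith
      simp only [hf, gT, gTail, if_neg (not_le.2 hxy)]
      rw [← mul_assoc, ← Real.exp_add]
      ring_nf
    rw [MeasureTheory.setIntegral_congr_fun measurableSet_Ico hcong,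
      MeasureTheory.integral_Ico_eq_integral_Ioo, ← MeasureTheory.integral_Ioc_eq_integral_Ioo, ← intervalIntegral.integral_of_le hx.le,
      intervalIntegral.integral_const_mul]
    congr 1
    have hsum_int : (∫ y in (0:ℝ)..x, ∑ j ∈ Finset.range k, (x - y) ^ j / (Nat.factorial j))
        = ∑ j ∈ Finset.range k, ∫ y in (0:ℝ)..x, (x - y) ^ j / (Nat.factorial j) :=
      intervalIntegral.integral_finset_sum
        (fun j _ => Continuous.intervalIntegrable (by fun_prop) _ _)
    rw [hsum_int]
    refine Finset.sum_congr rfl fun j _ => ?_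
    have h1 : (∫ y in (0:ℝ)..x, (x - y) ^ j / (Nat.factorial j))
        = (∫ y in (0:ℝ)..x, (x - y) ^ j) / (Nat.factorial j) := by
      rw [intervalIntegral.integral_div]
    have h2 : (∫ y in (0:ℝ)..x, (x - y) ^ j) = ∫ y in (x - x)..(x - 0), y ^ j :=
      intervalIntegral.integral_comp_sub_left (fun y => y ^ j) x
    rw [h1, h2]
    simp only [sub_self, sub_zero]
    rw [integral_pow, Nat.factorial_succ, zero_pow (Nat.succ_ne_zero j), sub_zero]
    push_cast
    rw [div_div]
  rw [hsplit, MeasureTheory.setIntegral_union ((Set.Iio_disjoint_Ici le_rfl).mono_left Set.Ico_subset_Iio_self) measurableSet_Ici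
    hint1 hint2, hIci, hIco]
  unfold gTail
  rw [Finset.sum_range_succ']
  simp only [pow_zero, Nat.factorial_zero, Nat.cast_one]
  ring


lemma f_integrableOn {k : ℕ} {x : ℝ} (hx : 0 < x) :
    IntegrableOn (fun y => Real.exp (-y) * gT k (x - y)) (Set.Ici (0:ℝ)) := by
  set f : ℝ → ℝ := fun y => Real.exp (-y) * gT k (x - y) with hf
  have hfmeas : Measurable f :=
    (Real.measurable_exp.comp measurable_neg).mul
      ((measurable_gT k).comp (measurable_const.sub measurable_id))
  have hIci_congr : ∀ y ∈ Set.Ici x, f y = Real.exp (-y) := by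
    intro y hy
    have h0 : x - y ≤ 0 := by simp only [Set.mem_Ici] at hy; linarith
    simp only [hf, gT, if_pos h0, mul_one]
  have hint2 : IntegrableOn f (Set.Ici x) := by
    rw [MeasureTheory.integrableOn_congr_fun hIci_congr measurableSet_Ici]
    exact (integrableOn_Ici_iff_integrableOn_Ioi).2
      (by simpa using exp_neg_integrableOn_Ioi x (by norm_num : (0:ℝ) < 1))
  have hint1 : IntegrableOn f (Set.Ico 0 x) := by
    refine Measure.integrableOn_of_bounded
      (M := 1 + ∑ j ∈ Finset.range k, x ^ j / (Nat.factorial j)) ?_ hfmeas.aestronglyMeasurable ?_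
    · exact measure_Ico_lt_top.ne
    · refine MeasureTheory.ae_restrict_of_forall_mem measurableSet_Ico ?_
      intro y hy
      obtain ⟨h0, h1⟩ := hy
      have hexp : Real.exp (-y) ≤ 1 := Real.exp_le_one_iff.2 (by linarith)
      have hb := gT_le (k := k) hx (show x - y ≤ x by linarith)
      have hgnn := gT_nonneg (k := k) (x - y)
      have hsum : (0:ℝ) ≤ ∑ j ∈ Finset.range k, x ^ j / (Nat.factorial j) :=
        Finset.sum_nonneg fun j _ => by positivity
      rw [Real.norm_eq_abs, abs_of_nonneg (mul_nonneg (Real.exp_pos _).le hgnn)]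
      nlinarith [(Real.exp_pos (-y)).le]
  have hsplit : Set.Ici (0:ℝ) = Set.Ico 0 x ∪ Set.Ici x := (Set.Ico_union_Ici_eq_Ici hx.le).symm
  rw [hsplit]
  exact hint1.union hint2

lemma expMeasure_Iio_zero : expMeasure 1 (Set.Iio 0) = 0 := by
  show gammaMeasure 1 1 (Set.Iio 0) = 0
  rw [gammaMeasure, withDensity_apply _ measurableSet_Iio]
  exact lintegral_gammaPDF_of_nonpos le_rfl

lemma tail_law {Ω : Type*} [MeasurableSpace Ω] (P : Measure Ω) [IsProbabilityMeasure P]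
    (τ : ℕ → Ω → ℝ) (hτmeas : ∀ j, Measurable (τ j))
    (hτindep : iIndepFun τ P)
    (hτlaw : ∀ j, P.map (τ j) = expMeasure 1) :
    ∀ (k : ℕ) (x : ℝ), P {ω | x ≤ ∑ j ∈ range k, τ j ω} = ENNReal.ofReal (gT k x) := by
  have hnull : ∀ j, P {ω | τ j ω < 0} = 0 := by
    intro j
    have : {ω | τ j ω < 0} = τ j ⁻¹' Set.Iio 0 := rfl
    rw [this, ← Measure.map_apply (hτmeas j) measurableSet_Iio, hτlaw j, expMeasure_Iio_zero]
  have hone : ∀ (k : ℕ) (x : ℝ), x ≤ 0 → P {ω | x ≤ ∑ j ∈ range k, τ j ω} = 1 := by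
    intro k x hx
    have hE : MeasurableSet {ω | x ≤ ∑ j ∈ range k, τ j ω} :=
      measurableSet_le measurable_const (Finset.measurable_sum _ fun j _ => hτmeas j)
    rw [← prob_compl_eq_zero_iff hE]
    have hsub : {ω | x ≤ ∑ j ∈ range k, τ j ω}ᶜ ⊆ ⋃ j ∈ Finset.range k, {ω | τ j ω < 0} := by
      intro ω hω
      simp only [Set.mem_compl_iff, Set.mem_setOf_eq, not_le] at hω
      by_contra hcon
      simp only [Set.mem_iUnion, Set.mem_setOf_eq, not_exists, not_lt] at hcon
      have : (0:ℝ) ≤ ∑ j ∈ range k, τ j ω :=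
        Finset.sum_nonneg fun j hj => hcon j hj
      linarith
    exact measure_mono_null hsub
      ((measure_biUnion_null_iff (Finset.range k).countable_toSet).2 fun j _ => hnull j)
  intro k
  induction k with
  | zero =>
    intro x
    by_cases hx : x ≤ 0
    · rw [hone 0 x hx]
      simp [gT, hx]
    · have : {ω : Ω | x ≤ ∑ j ∈ range 0, τ j ω} = ∅ := by
        ext ω; simp; linarith [not_le.1 hx]
      rw [this]
      simp [gT, hx, gTail]
  | succ k ih =>
    intro x
    by_cases hx : x ≤ 0
    · rw [hone (k+1) x hx]
      simp [gT, hx]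
    · push_neg at hx
      set S : Ω → ℝ := fun ω => ∑ j ∈ range k, τ j ω with hS
      have hmS : Measurable S := Finset.measurable_sum _ fun j _ => hτmeas j
      have hind : IndepFun S (τ k) P := by
        have h := hτindep.indepFun_sum_range_succ hτmeas k
        have heq : S = ∑ j ∈ range k, τ j := by ext ω; simp [hS]
        rw [heq]
        exact h
      have hset : MeasurableSet {p : ℝ × ℝ | x ≤ p.1 + p.2} :=
        measurableSet_le measurable_const (measurable_fst.add measurable_snd)
      have hEeq : {ω : Ω | x ≤ ∑ j ∈ range (k+1), τ j ω}
          = (fun ω => (S ω, τ k ω)) ⁻¹' {p : ℝ × ℝ | x ≤ p.1 + p.2} := by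
        ext ω
        simp [hS, Finset.sum_range_succ]
      rw [hEeq, ← Measure.map_apply (hmS.prodMk (hτmeas k)) hset,
        (indepFun_iff_map_prod_eq_prod_map_map hmS.aemeasurable
          (hτmeas k).aemeasurable).1 hind]
      haveI : SFinite (P.map S) := by
        have : IsProbabilityMeasure (P.map S) := Measure.isProbabilityMeasure_map hmS.aemeasurable
        infer_instance
      rw [Measure.prod_apply_symm hset]
      have hpre : ∀ y : ℝ, ((fun z => (z, y)) ⁻¹' {p : ℝ × ℝ | x ≤ p.1 + p.2})
          = Set.Ici (x - y) := by
        intro y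
        ext z
        simp only [Set.mem_preimage, Set.mem_setOf_eq, Set.mem_Ici]
        constructor <;> intro <;> linarith
      have hval : ∀ y : ℝ, (P.map S) (Set.Ici (x - y)) = ENNReal.ofReal (gT k (x - y)) := by
        intro y
        rw [Measure.map_apply hmS measurableSet_Ici]
        exact ih (x - y)
      simp_rw [hpre, hval]
      rw [hτlaw k]
      show (∫⁻ y, ENNReal.ofReal (gT k (x - y)) ∂(gammaMeasure 1 1)) = _
      have hmpdf : Measurable (gammaPDF 1 1) := by
        unfold gammaPDF
        exact (measurable_gammaPDFReal 1 1).ennreal_ofReal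
      have hg : Measurable fun y : ℝ => ENNReal.ofReal (gT k (x - y)) := by
        exact Measurable.ennreal_ofReal ((measurable_gT k).comp (by fun_prop))
      rw [gammaMeasure, lintegral_withDensity_eq_lintegral_mul _ hmpdf hg]
      have hpdf : ∀ y : ℝ, (gammaPDF 1 1 y) = ENNReal.ofReal (if 0 ≤ y then Real.exp (-y) else 0) := by
        intro y
        show exponentialPDF 1 y = _
        rw [exponentialPDF_eq]
        norm_num
      have hF : ∀ y : ℝ, (gammaPDF 1 1 * fun y => ENNReal.ofReal (gT k (x - y))) y
          = ENNReal.ofReal ((Set.Ici (0:ℝ)).indicator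
              (fun y => Real.exp (-y) * gT k (x - y)) y) := by
        intro y
        simp only [Pi.mul_apply, hpdf y]
        by_cases h : 0 ≤ y
        · rw [if_pos h, show (Set.Ici (0:ℝ)).indicator (fun y => Real.exp (-y) * gT k (x - y)) y
              = Real.exp (-y) * gT k (x - y) from Set.indicator_of_mem h _,
            ENNReal.ofReal_mul (Real.exp_pos _).le]
        · rw [if_neg h, show (Set.Ici (0:ℝ)).indicator (fun y => Real.exp (-y) * gT k (x - y)) y
              = 0 from Set.indicator_of_notMem h _]
          simp
      simp_rw [hF]
      rw [← MeasureTheory.ofReal_integral_eq_lintegral_ofReal]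
      · rw [MeasureTheory.integral_indicator measurableSet_Ici, real_int hx]
        simp [gT, not_le.2 hx]
      · rw [integrable_indicator_iff measurableSet_Ici]
        exact f_integrableOn hx
      · exact Filter.Eventually.of_forall fun y => by
          simpa using Set.indicator_nonneg
            (fun z _ => mul_nonneg (Real.exp_pos _).le (gT_nonneg _)) y

lemma tail_ratio {k : ℕ} (hk : 1 ≤ k) {s t : ℝ} (ht : 0 ≤ t) (hst : t ≤ s) :
    gTail k ((k:ℝ) + s + t) ≤ Real.exp (-(s * t) / ((k:ℝ) + s + t)) * gTail k ((k:ℝ) + s) := by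
  have hs : 0 ≤ s := ht.trans hst
  have hk1 : (1:ℝ) ≤ (k:ℝ) := by exact_mod_cast hk
  set a : ℝ := (k:ℝ) + s with ha_def
  set b : ℝ := (k:ℝ) + s + t with hb_def
  have ha : (1:ℝ) ≤ a := by simp only [ha_def]; linarith
  have hapos : 0 < a := by linarith
  have hab : a ≤ b := by simp only [ha_def, hb_def]; linarith
  have hbpos : 0 < b := by linarith
  -- step 1 : sum comparison
  have hsum : (∑ j ∈ Finset.range k, b ^ j / (Nat.factorial j))
      ≤ (b / a) ^ (k - 1) * ∑ j ∈ Finset.range k, a ^ j / (Nat.factorial j) := by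
    rw [Finset.mul_sum]
    refine Finset.sum_le_sum fun j hj => ?_
    have hjk : j ≤ k - 1 := Nat.le_sub_one_of_lt (Finset.mem_range.1 hj)
    have hm : j + (k - 1 - j) = k - 1 := by omega
    have key : b ^ j * a ^ (k - 1) ≤ b ^ (k - 1) * a ^ j := by
      rw [← hm, pow_add, pow_add]
      have h1 : a ^ (k - 1 - j) ≤ b ^ (k - 1 - j) := pow_le_pow_left₀ hapos.le hab _
      have h2 : (0:ℝ) ≤ b ^ j := by positivity
      have h3 : (0:ℝ) ≤ a ^ j := by positivity
      calc b ^ j * (a ^ j * a ^ (k - 1 - j)) = (b ^ j * a ^ (k - 1 - j)) * a ^ j := by ring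
        _ ≤ (b ^ j * b ^ (k - 1 - j)) * a ^ j := by
            have := mul_le_mul_of_nonneg_left h1 h2
            nlinarith
        _ = b ^ j * b ^ (k - 1 - j) * a ^ j := rfl
    have hpow : b ^ j ≤ (b / a) ^ (k - 1) * a ^ j := by
      rw [div_pow, div_mul_eq_mul_div, le_div_iff₀ (by positivity : (0:ℝ) < a ^ (k-1))]
      linarith [key]
    rw [mul_div_assoc']
    gcongr
  -- step 2 : exponential comparison
  have hexp : Real.exp (-b) * (b / a) ^ (k - 1) ≤ Real.exp (-(s * t) / b) * Real.exp (-a) := by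
    have hba : 0 < b / a := by positivity
    have hlog : Real.log (b / a) ≤ t / a := by
      have h1 := Real.log_le_sub_one_of_pos hba
      have h2 : b / a - 1 = t / a := by
        field_simp
        simp only [hb_def, ha_def]
        ring
      linarith
    have hlog0 : 0 ≤ Real.log (b / a) := Real.log_nonneg (by
      rw [le_div_iff₀ hapos]; linarith)
    have hmul : ((k:ℝ) - 1) * t * b + s * t * a ≤ t * (a * b) := by
      have hid : t * (a * b) - (((k:ℝ) - 1) * t * b + s * t * a)
          = t * ((k:ℝ) + s + t * (s + 1)) := by
        simp only [ha_def, hb_def]; ring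
      have hnn : (0:ℝ) ≤ t * ((k:ℝ) + s + t * (s + 1)) :=
        mul_nonneg ht (by nlinarith)
      linarith
    have hlin : ((k:ℝ) - 1) * (t / a) + s * t / b ≤ t := by
      have heq : ((k:ℝ) - 1) * (t / a) + s * t / b
          = (((k:ℝ) - 1) * t * b + s * t * a) / (a * b) := by
        field_simp
        try ring
      rw [heq, div_le_iff₀ (by positivity)]
      linarith [hmul]
    have hcast : ((k - 1 : ℕ) : ℝ) = (k:ℝ) - 1 := by
      rw [Nat.cast_sub hk]; norm_num
    have hrw : (b / a) ^ (k - 1) = Real.exp (((k - 1 : ℕ) : ℝ) * Real.log (b / a)) := by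
      rw [Real.exp_nat_mul, Real.exp_log hba]
    rw [hrw, ← Real.exp_add, ← Real.exp_add]
    apply Real.exp_le_exp.2
    rw [hcast]
    have hmono : ((k:ℝ) - 1) * Real.log (b / a) ≤ ((k:ℝ) - 1) * (t / a) :=
      mul_le_mul_of_nonneg_left hlog (by linarith)
    have hba' : b - a = t := by simp only [hb_def, ha_def]; ring
    have : -(s * t) / b = -(s * t / b) := by ring
    rw [this]
    linarith
  -- combine
  have hSa : (0:ℝ) ≤ ∑ j ∈ Finset.range k, a ^ j / (Nat.factorial j) :=
    Finset.sum_nonneg fun j _ => by positivity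
  calc gTail k b = Real.exp (-b) * ∑ j ∈ Finset.range k, b ^ j / (Nat.factorial j) := rfl
    _ ≤ Real.exp (-b) * ((b / a) ^ (k - 1) * ∑ j ∈ Finset.range k, a ^ j / (Nat.factorial j)) :=
        mul_le_mul_of_nonneg_left hsum (Real.exp_pos _).le
    _ = (Real.exp (-b) * (b / a) ^ (k - 1)) * ∑ j ∈ Finset.range k, a ^ j / (Nat.factorial j) := by
        ring
    _ ≤ (Real.exp (-(s * t) / b) * Real.exp (-a)) * ∑ j ∈ Finset.range k, a ^ j / (Nat.factorial j) :=
        mul_le_mul_of_nonneg_right hexp hSa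
    _ = Real.exp (-(s * t) / b) * gTail k a := by
        rw [gTail]; ring

/-- Lemma 7.3: for i.i.d. Exponential(1) random variables `τ_j`,
`P(∑_{j=1}^k (τ_j − 1) ≥ s + t) ≤ e^{−st/(k+s+t)} P(∑_{j=1}^k (τ_j − 1) ≥ s)`
for all `k ≥ 1` and `s ≥ t ≥ 0`. -/
theorem statement5 {Ω : Type*} [MeasurableSpace Ω] (P : Measure Ω)
    [IsProbabilityMeasure P]
    (τ : ℕ → Ω → ℝ) (hτmeas : ∀ j, Measurable (τ j))
    (hτindep : iIndepFun τ P)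
    (hτlaw : ∀ j, P.map (τ j) = expMeasure 1)
    (k : ℕ) (hk : 1 ≤ k) (s t : ℝ) (ht : 0 ≤ t) (hst : t ≤ s) :
    P {ω | s + t ≤ ∑ j ∈ range k, (τ j ω - 1)}
      ≤ ENNReal.ofReal (Real.exp (-(s * t) / (k + s + t)))
        * P {ω | s ≤ ∑ j ∈ range k, (τ j ω - 1)} := by
  have hs : 0 ≤ s := ht.trans hst
  have hk1 : (1:ℝ) ≤ (k:ℝ) := by exact_mod_cast hk
  have h1 : {ω : Ω | s + t ≤ ∑ j ∈ range k, (τ j ω - 1)}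
      = {ω : Ω | ((k:ℝ) + s + t) ≤ ∑ j ∈ range k, τ j ω} := by
    ext ω
    simp only [Set.mem_setOf_eq, Finset.sum_sub_distrib, Finset.sum_const, Finset.card_range,
      nsmul_eq_mul, mul_one]
    constructor <;> intro <;> linarith
  have h2 : {ω : Ω | s ≤ ∑ j ∈ range k, (τ j ω - 1)}
      = {ω : Ω | ((k:ℝ) + s) ≤ ∑ j ∈ range k, τ j ω} := by
    ext ω
    simp only [Set.mem_setOf_eq, Finset.sum_sub_distrib, Finset.sum_const, Finset.card_range,
      nsmul_eq_mul, mul_one]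
    constructor <;> intro <;> linarith
  rw [h1, h2, tail_law P τ hτmeas hτindep hτlaw k ((k:ℝ) + s + t),
    tail_law P τ hτmeas hτindep hτlaw k ((k:ℝ) + s)]
  have hb : ¬ ((k:ℝ) + s + t ≤ 0) := by push_neg; linarith
  have ha : ¬ ((k:ℝ) + s ≤ 0) := by push_neg; linarith
  rw [show gT k ((k:ℝ) + s + t) = gTail k ((k:ℝ) + s + t) from if_neg hb,
    show gT k ((k:ℝ) + s) = gTail k ((k:ℝ) + s) from if_neg ha,
    ← ENNReal.ofReal_mul (Real.exp_pos _).le]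
  exact ENNReal.ofReal_le_ofReal (tail_ratio hk ht hst)
end

section
/- Let (τ_j)_{j≥1} be a sequence of independent, identically distributed random variables, each Exponential(1) distributed. Then for every natural number k ≥ 1 and all reals s, t ≥ 0 with s + t < k, P( Σ_{j=1}^k (τ_j − 1) ≤ −(s + t) ) ≤ e^{−t(s−1)/(k−s)} · P( Σ_{j=1}^k (τ_j − 1) ≤ −s ). -/
open MeasureTheory ProbabilityTheory Finset

section AuxLemmas
open Real Set
open scoped ENNReal NNReal

lemma gPDF_eq (m : ℕ) (x : ℝ) :
    gammaPDF (m + 1) 1 x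
      = ENNReal.ofReal (if 0 ≤ x then x ^ m * Real.exp (-x) / m.factorial else 0) := by
  rw [gammaPDF_eq]
  congr 1
  split_ifs with hx
  · rw [Real.one_rpow, Real.Gamma_nat_eq_factorial]
    rw [add_sub_cancel_right, Real.rpow_natCast]
    ring_nf
  · rfl

lemma ePDF_eq (y : ℝ) :
    gammaPDF 1 1 y = ENNReal.ofReal (if 0 ≤ y then Real.exp (-y) else 0) := by
  have := gPDF_eq 0 y
  norm_num at this ⊢
  convert this using 2

lemma conv_phi_eq (m : ℕ) (w : ℝ) :
    (fun x : ℝ => (if 0 ≤ x then x ^ m * Real.exp (-x) / m.factorial else 0)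
        * (if 0 ≤ w - x then Real.exp (-(w - x)) else 0))
      = (Icc 0 w).indicator (fun x => x ^ m * Real.exp (-w) / m.factorial) := by
  funext x
  rw [Set.indicator_apply]
  by_cases h1 : 0 ≤ x <;> by_cases h2 : 0 ≤ w - x
  · rw [if_pos h1, if_pos h2, if_pos (Set.mem_Icc.mpr ⟨h1, by linarith⟩)]
    have h3 : Real.exp (-x) * Real.exp (-(w - x)) = Real.exp (-w) := by
      rw [← Real.exp_add]; ring_nf
    rw [div_mul_eq_mul_div, mul_assoc, h3]
  · rw [if_pos h1, if_neg h2, if_neg (fun h => h2 (by linarith [(Set.mem_Icc.mp h).2])), mul_zero]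
  · rw [if_neg h1, if_neg (fun h => h1 (Set.mem_Icc.mp h).1), zero_mul]
  · rw [if_neg h1, if_neg (fun h => h1 (Set.mem_Icc.mp h).1), zero_mul]

lemma conv_lemma (m : ℕ) (w : ℝ) :
    ∫⁻ x, gammaPDF (m + 1) 1 x * gammaPDF 1 1 (w - x) = gammaPDF (m + 1 + 1) 1 w := by
  have key : ∀ x : ℝ, gammaPDF (m + 1) 1 x * gammaPDF 1 1 (w - x)
      = ENNReal.ofReal ((Icc 0 w).indicator
          (fun x => x ^ m * Real.exp (-w) / m.factorial) x) := by
    intro x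
    rw [gPDF_eq m, ePDF_eq,
      ← ENNReal.ofReal_mul (by split_ifs with h <;> positivity), ← conv_phi_eq m w]
  simp_rw [key]
  by_cases hw : 0 ≤ w
  · have hint : IntegrableOn (fun x : ℝ => x ^ m * Real.exp (-w) / m.factorial) (Icc 0 w) := by
      apply Continuous.integrableOn_Icc
      continuity
    rw [← MeasureTheory.ofReal_integral_eq_lintegral_ofReal
        (hint.integrable_indicator measurableSet_Icc)
        (Filter.Eventually.of_forall (Set.indicator_nonneg (fun x hx => by
          have : (0:ℝ) ≤ x := (Set.mem_Icc.mp hx).1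
          positivity)))]
    rw [MeasureTheory.integral_indicator measurableSet_Icc]
    rw [integral_Icc_eq_integral_Ioc, ← intervalIntegral.integral_of_le hw]
    rw [intervalIntegral.integral_div, intervalIntegral.integral_mul_const,
      integral_pow]
    have hg := gPDF_eq (m+1) w
    push_cast at hg
    rw [hg, if_pos hw, Nat.factorial_succ]
    push_cast
    congr 1
    have hm : ((m:ℝ) + 1) ≠ 0 := by positivity
    field_simp
    simp
  · have : ∀ x : ℝ, ((Icc 0 w).indicator
        (fun x => x ^ m * Real.exp (-w) / m.factorial) x) = 0 := by
      intro x
      rw [Set.indicator_of_notMem]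
      intro h
      rcases Set.mem_Icc.mp h with ⟨h1, h2⟩
      exact hw (le_trans h1 h2)
    simp_rw [this, ENNReal.ofReal_zero, lintegral_zero,
      gammaPDF_of_neg (show w < 0 by linarith [not_le.mp hw])]

lemma gamma_cdf (m : ℕ) {u : ℝ} (hu : 0 ≤ u) :
    gammaMeasure (m + 1) 1 (Iic u)
      = ENNReal.ofReal (∫ x in (0:ℝ)..u, x ^ m * Real.exp (-x) / m.factorial) := by
  rw [gammaMeasure, withDensity_apply _ measurableSet_Iic,
    lintegral_Iic_eq_lintegral_Iio_add_Icc _ hu, lintegral_gammaPDF_of_nonpos le_rfl, zero_add]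
  have hcong : ∀ x ∈ Icc (0:ℝ) u, gammaPDF (m+1) 1 x
      = ENNReal.ofReal (x ^ m * Real.exp (-x) / m.factorial) := by
    intro x hx
    rw [gPDF_eq m x, if_pos (Set.mem_Icc.mp hx).1]
  rw [setLIntegral_congr_fun measurableSet_Icc hcong]
  have hint : IntegrableOn (fun x : ℝ => x ^ m * Real.exp (-x) / m.factorial) (Icc 0 u) := by
    apply Continuous.integrableOn_Icc; continuity
  rw [← MeasureTheory.ofReal_integral_eq_lintegral_ofReal hint
      ((ae_restrict_iff' measurableSet_Icc).mpr (Filter.Eventually.of_forall (fun x hx => by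
        have : (0:ℝ) ≤ x := (Set.mem_Icc.mp hx).1
        positivity)))]
  rw [integral_Icc_eq_integral_Ioc, ← intervalIntegral.integral_of_le hu]

lemma key_real (m : ℕ) {a t : ℝ} (ha : 0 < a) (ht : 0 ≤ t) (hta : t < a) :
    (∫ x in (0:ℝ)..(a - t), x ^ m * Real.exp (-x))
      ≤ Real.exp (t - t * m / a) * ∫ x in (0:ℝ)..a, x ^ m * Real.exp (-x) := by
  set c : ℝ := (a - t) / a with hc_def
  have hc0 : 0 < c := div_pos (by linarith) ha
  have hc1 : c ≤ 1 := by
    rw [hc_def, div_le_one ha]; linarith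
  have hca : c * a = a - t := div_mul_cancel₀ _ ha.ne'
  have h1 : (∫ x in (0:ℝ)..(a - t), x ^ m * Real.exp (-x))
      = c • ∫ x in (0:ℝ)..a, (c * x) ^ m * Real.exp (-(c * x)) := by
    rw [intervalIntegral.smul_integral_comp_mul_left (f := fun x => x ^ m * Real.exp (-x)) c,
      mul_zero, hca]
  rw [h1, smul_eq_mul]
  have hint1 : IntervalIntegrable (fun x : ℝ => (c * x) ^ m * Real.exp (-(c * x)))
      volume 0 a := (Continuous.intervalIntegrable (by continuity) _ _)
  have hint2 : IntervalIntegrable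
      (fun x : ℝ => (c ^ m * Real.exp t) * (x ^ m * Real.exp (-x))) volume 0 a :=
    (Continuous.intervalIntegrable (by continuity) _ _)
  have hmono : (∫ x in (0:ℝ)..a, (c * x) ^ m * Real.exp (-(c * x)))
      ≤ ∫ x in (0:ℝ)..a, (c ^ m * Real.exp t) * (x ^ m * Real.exp (-x)) := by
    apply intervalIntegral.integral_mono_on ha.le hint1 hint2
    intro x hx
    rcases Set.mem_Icc.mp hx with ⟨hx0, hxa⟩
    rw [mul_pow]
    have hexp : Real.exp (-(c * x)) ≤ Real.exp t * Real.exp (-x) := by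
      rw [← Real.exp_add, Real.exp_le_exp]
      have h2 : (1 - c) * x ≤ (1 - c) * a := by
        apply mul_le_mul_of_nonneg_left hxa; linarith
      have h3 : (1 - c) * a = t := by
        rw [hc_def]; field_simp; ring
      nlinarith
    calc c ^ m * x ^ m * Real.exp (-(c * x))
        ≤ c ^ m * x ^ m * (Real.exp t * Real.exp (-x)) := by
          apply mul_le_mul_of_nonneg_left hexp; positivity
      _ = c ^ m * Real.exp t * (x ^ m * Real.exp (-x)) := by ring
  rw [intervalIntegral.integral_const_mul] at hmono
  have hJ : 0 ≤ ∫ x in (0:ℝ)..a, x ^ m * Real.exp (-x) :=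
    intervalIntegral.integral_nonneg ha.le (fun u hu => by
      have := (Set.mem_Icc.mp hu).1; positivity)
  have hstep : c * ∫ x in (0:ℝ)..a, (c * x) ^ m * Real.exp (-(c * x))
      ≤ (c ^ (m+1) * Real.exp t) * ∫ x in (0:ℝ)..a, x ^ m * Real.exp (-x) := by
    calc c * ∫ x in (0:ℝ)..a, (c * x) ^ m * Real.exp (-(c * x))
        ≤ c * (c ^ m * Real.exp t * ∫ x in (0:ℝ)..a, x ^ m * Real.exp (-x)) :=
          mul_le_mul_of_nonneg_left hmono hc0.le
      _ = (c ^ (m+1) * Real.exp t) * ∫ x in (0:ℝ)..a, x ^ m * Real.exp (-x) := by ring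
  refine hstep.trans (mul_le_mul_of_nonneg_right ?_ hJ)
  -- c ^ (m+1) * exp t ≤ exp (t - t * m / a)
  have hcexp : c ≤ Real.exp (-(t / a)) := by
    have := Real.add_one_le_exp (-(t / a))
    have hc_eq : c = 1 - t / a := by rw [hc_def]; field_simp
    linarith
  have hpow : c ^ (m+1) ≤ Real.exp (-(t / a)) ^ (m+1) :=
    pow_le_pow_left₀ hc0.le hcexp _
  have : c ^ (m+1) * Real.exp t ≤ Real.exp (-(t / a)) ^ (m+1) * Real.exp t :=
    mul_le_mul_of_nonneg_right hpow (Real.exp_nonneg t)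
  refine this.trans ?_
  rw [← Real.exp_nat_mul, ← Real.exp_add, Real.exp_le_exp]
  have h4 : 0 ≤ t / a := div_nonneg ht ha.le
  have h5 : ((m+1 : ℕ) : ℝ) = (m : ℝ) + 1 := by push_cast; ring
  rw [h5]
  have : t * m / a = (m : ℝ) * (t / a) := by ring
  rw [this]
  nlinarith

lemma sum_law {Ω : Type*} [MeasurableSpace Ω] (P : Measure Ω) [IsProbabilityMeasure P]
    (τ : ℕ → Ω → ℝ) (hτmeas : ∀ j, Measurable (τ j))
    (hτindep : iIndepFun τ P)
    (hτlaw : ∀ j, P.map (τ j) = expMeasure 1) (m : ℕ) :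
    P.map (fun ω => ∑ j ∈ range (m + 1), τ j ω) = gammaMeasure (m + 1) 1 := by
  induction m with
  | zero =>
    have : (fun ω => ∑ j ∈ range (0 + 1), τ j ω) = τ 0 := by
      funext ω; simp
    rw [this, show ((0:ℕ):ℝ) + 1 = 1 by norm_num]
    exact hτlaw 0
  | succ n ih =>
    set S : Ω → ℝ := fun ω => ∑ j ∈ range (n + 1), τ j ω with hS_def
    have hS : Measurable S := Finset.measurable_sum _ (fun i _ => hτmeas i)
    have hY : Measurable (τ (n + 1)) := hτmeas (n + 1)
    haveI : IsProbabilityMeasure (expMeasure 1) := isProbabilityMeasure_expMeasure one_pos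
    haveI : IsProbabilityMeasure (gammaMeasure (n + 1 : ℝ) 1) :=
      isProbabilityMeasure_gammaMeasure (by positivity) one_pos
    haveI : IsProbabilityMeasure (gammaMeasure ((n:ℝ) + 1 + 1) 1) :=
      isProbabilityMeasure_gammaMeasure (by positivity) one_pos
    have hind : IndepFun S (τ (n + 1)) P := by
      have h := hτindep.indepFun_finsetSum_of_notMem hτmeas
        (Finset.notMem_range_self (n := n + 1))
      have hfe : (∑ j ∈ range (n + 1), τ j) = S := by
        funext ω; exact Finset.sum_apply ω (range (n+1)) τ
      rwa [hfe] at h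
    have hmap : P.map (fun ω => (S ω, τ (n + 1) ω)) = (P.map S).prod (P.map (τ (n + 1))) :=
      (indepFun_iff_map_prod_eq_prod_map_map hS.aemeasurable hY.aemeasurable).mp hind
    haveI : IsProbabilityMeasure (P.map (fun ω => ∑ j ∈ range (n + 1 + 1), τ j ω)) :=
      Measure.isProbabilityMeasure_map (Finset.measurable_sum _ (fun i _ => hτmeas i)).aemeasurable
    refine Measure.ext_of_Iic _ _ (fun z => ?_)
    have hpairset : MeasurableSet {p : ℝ × ℝ | p.1 + p.2 ≤ z} :=
      measurableSet_le (measurable_fst.add measurable_snd) measurable_const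
    have e1 : (P.map (fun ω => ∑ j ∈ range (n + 1 + 1), τ j ω)) (Iic z)
        = ((gammaMeasure (n + 1 : ℝ) 1).prod (expMeasure 1)) {p : ℝ × ℝ | p.1 + p.2 ≤ z} := by
      rw [Measure.map_apply (Finset.measurable_sum _ (fun i _ => hτmeas i)) measurableSet_Iic]
      have hset : (fun ω => ∑ j ∈ range (n + 1 + 1), τ j ω) ⁻¹' (Iic z)
          = (fun ω => (S ω, τ (n + 1) ω)) ⁻¹' {p : ℝ × ℝ | p.1 + p.2 ≤ z} := by
        ext ω
        simp only [Set.mem_preimage, Set.mem_Iic, Set.mem_setOf_eq, hS_def,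
          Finset.sum_range_succ (f := fun j => τ j ω) (n := n + 1)]
      rw [hset, ← Measure.map_apply (hS.prodMk hY) hpairset, hmap, ih, hτlaw]
    rw [e1, Measure.prod_apply hpairset]
    have e2 : ∀ x : ℝ, expMeasure 1 (Prod.mk x ⁻¹' {p : ℝ × ℝ | p.1 + p.2 ≤ z})
        = expMeasure 1 (Iic (z - x)) := by
      intro x; congr 1; ext y
      simp only [Set.mem_preimage, Set.mem_setOf_eq, Set.mem_Iic]
      constructor <;> intro h <;> linarith
    rw [lintegral_congr e2]
    set F : ℝ → ℝ → ℝ≥0∞ := fun x w =>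
      gammaPDF (n + 1 : ℝ) 1 x * gammaPDF 1 1 (w - x) * (Iic z).indicator 1 w with hF_def
    have hgmeas : Measurable (gammaPDF (n + 1 : ℝ) 1) :=
      (measurable_gammaPDFReal _ _).ennreal_ofReal
    have hemeas : Measurable (gammaPDF 1 1) := (measurable_gammaPDFReal _ _).ennreal_ofReal
    have hanti : Measurable (fun x : ℝ => expMeasure 1 (Iic (z - x))) := by
      apply Antitone.measurable
      intro x y hxy
      exact measure_mono (Iic_subset_Iic.mpr (by linarith))
    have claim1 : ∀ x : ℝ, gammaPDF (n + 1 : ℝ) 1 x * expMeasure 1 (Iic (z - x))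
        = ∫⁻ y, F x (x + y) := by
      intro x
      have hptw : ∀ y : ℝ, F x (x + y)
          = gammaPDF (n + 1 : ℝ) 1 x * (Iic (z - x)).indicator (gammaPDF 1 1) y := by
        intro y
        rw [hF_def]
        simp only [add_sub_cancel_left]
        by_cases hy : y ≤ z - x
        · rw [Set.indicator_of_mem (Set.mem_Iic.mpr (by linarith : x + y ≤ z)),
            Set.indicator_of_mem (Set.mem_Iic.mpr hy), Pi.one_apply, mul_one]
        · rw [Set.indicator_of_notMem (by simp only [Set.mem_Iic]; intro h; exact hy (by linarith)),
            Set.indicator_of_notMem (by simpa using hy), mul_zero, mul_zero]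
      simp_rw [hptw]
      rw [lintegral_const_mul _ (hemeas.indicator measurableSet_Iic),
        lintegral_indicator measurableSet_Iic _]
      congr 1
      rw [show expMeasure 1 = gammaMeasure 1 1 from rfl, gammaMeasure,
        withDensity_apply _ measurableSet_Iic]
    have claim2 : ∀ x : ℝ, (∫⁻ y, F x (x + y)) = ∫⁻ w, F x w := fun x =>
      lintegral_add_left_eq_self (F x) x
    rw [show gammaMeasure ((n:ℝ) + 1) 1 = volume.withDensity (gammaPDF ((n:ℝ)+1) 1) from rfl,
      lintegral_withDensity_eq_lintegral_mul volume hgmeas hanti]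
    simp_rw [Pi.mul_apply]
    simp_rw [claim1, claim2]
    have hFmeas : Measurable (Function.uncurry F) := by
      apply Measurable.mul
      · exact (hgmeas.comp measurable_fst).mul (hemeas.comp (measurable_snd.sub measurable_fst))
      · exact (measurable_const.indicator measurableSet_Iic).comp measurable_snd
    rw [lintegral_lintegral_swap hFmeas.aemeasurable]
    have inner : ∀ w : ℝ, (∫⁻ x, F x w) = gammaPDF ((n:ℝ) + 1 + 1) 1 w * (Iic z).indicator 1 w := by
      intro w
      rw [hF_def]
      simp only
      have hconv_meas : Measurable (fun x : ℝ => gammaPDF ((n:ℝ)+1) 1 x * gammaPDF 1 1 (w - x)) :=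
        hgmeas.mul (hemeas.comp (measurable_const.sub measurable_id))
      rw [lintegral_mul_const _ hconv_meas]
      congr 1
      exact conv_lemma n w
    simp_rw [inner]
    have hind2 : ∀ w : ℝ, gammaPDF ((n:ℝ) + 1 + 1) 1 w * (Iic z).indicator 1 w
        = (Iic z).indicator (gammaPDF ((n:ℝ) + 1 + 1) 1) w := by
      intro w
      by_cases hw : w ∈ Iic z
      · rw [Set.indicator_of_mem hw, Set.indicator_of_mem hw, Pi.one_apply, mul_one]
      · rw [Set.indicator_of_notMem hw, Set.indicator_of_notMem hw, mul_zero]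
    simp_rw [hind2]
    rw [lintegral_indicator measurableSet_Iic _, gammaMeasure,
      withDensity_apply _ measurableSet_Iic]
    norm_num


end AuxLemmas

/-- Lemma 7.5: for i.i.d. Exponential(1) random variables `τ_j`,
`P(∑_{j=1}^k (τ_j − 1) ≤ −(s + t)) ≤ e^{−t(s−1)/(k−s)} P(∑_{j=1}^k (τ_j − 1) ≤ −s)`
for all `k ≥ 1` and `s, t ≥ 0` with `s + t < k`. -/
theorem statement6 {Ω : Type*} [MeasurableSpace Ω] (P : Measure Ω)
    [IsProbabilityMeasure P]
    (τ : ℕ → Ω → ℝ) (hτmeas : ∀ j, Measurable (τ j))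
    (hτindep : iIndepFun τ P)
    (hτlaw : ∀ j, P.map (τ j) = expMeasure 1)
    (k : ℕ) (hk : 1 ≤ k) (s t : ℝ) (hs : 0 ≤ s) (ht : 0 ≤ t) (hstk : s + t < k) :
    P {ω | ∑ j ∈ range k, (τ j ω - 1) ≤ -(s + t)}
      ≤ ENNReal.ofReal (Real.exp (-(t * (s - 1)) / (k - s)))
        * P {ω | ∑ j ∈ range k, (τ j ω - 1) ≤ -s} := by
  obtain ⟨m, rfl⟩ : ∃ m, k = m + 1 := ⟨k - 1, (Nat.succ_pred_eq_of_pos hk).symm⟩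
  have hK : ((m + 1 : ℕ) : ℝ) = (m : ℝ) + 1 := by push_cast; ring
  rw [hK] at hstk
  set K : ℝ := (m : ℝ) + 1 with hK_def
  set a : ℝ := K - s with ha_def
  have ha : 0 < a := by rw [ha_def]; linarith
  have hta : t < a := by rw [ha_def]; linarith
  have hSmeas : Measurable (fun ω => ∑ j ∈ range (m + 1), τ j ω) :=
    Finset.measurable_sum _ (fun i _ => hτmeas i)
  have hlaw := sum_law P τ hτmeas hτindep hτlaw m
  have hevent : ∀ u : ℝ, {ω | ∑ j ∈ range (m + 1), (τ j ω - 1) ≤ -u}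
      = (fun ω => ∑ j ∈ range (m + 1), τ j ω) ⁻¹' (Set.Iic (K - u)) := by
    intro u
    ext ω
    simp only [Set.mem_setOf_eq, Set.mem_preimage, Set.mem_Iic, Finset.sum_sub_distrib,
      Finset.sum_const, Finset.card_range, nsmul_eq_mul, mul_one, hK_def]
    constructor <;> intro h <;> push_cast at * <;> linarith
  have hProb : ∀ u : ℝ, P {ω | ∑ j ∈ range (m + 1), (τ j ω - 1) ≤ -u}
      = gammaMeasure ((m:ℝ) + 1) 1 (Set.Iic (K - u)) := by
    intro u
    rw [hevent u, ← Measure.map_apply hSmeas measurableSet_Iic, hlaw]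
  rw [hProb (s + t), hProb s]
  have h1 : K - (s + t) = a - t := by rw [ha_def]; ring
  have h2 : K - s = a := by rw [ha_def]
  rw [h1, h2]
  rw [gamma_cdf m (by linarith : (0:ℝ) ≤ a - t), gamma_cdf m (by linarith : (0:ℝ) ≤ a)]
  simp_rw [intervalIntegral.integral_div]
  set J : ℝ → ℝ := fun u => ∫ x in (0:ℝ)..u, x ^ m * Real.exp (-x) with hJ_def
  have hkey := key_real m ha ht hta
  have hE : t - t * m / a = -(t * (s - 1)) / (((m + 1 : ℕ) : ℝ) - s) := by
    have h3 : ((m + 1 : ℕ) : ℝ) - s = a := by push_cast; rw [ha_def, hK_def]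
    have hm : (m : ℝ) = a + s - 1 := by rw [ha_def, hK_def]; ring
    rw [h3, hm]
    field_simp
    ring
  rw [← hE, ← ENNReal.ofReal_mul (Real.exp_nonneg _)]
  apply ENNReal.ofReal_le_ofReal
  have hfact : (0:ℝ) < m.factorial := by positivity
  calc J (a - t) / m.factorial
      ≤ (Real.exp (t - t * m / a) * J a) / m.factorial := by
        apply div_le_div_of_nonneg_right hkey hfact.le
      _ = Real.exp (t - t * m / a) * (J a / m.factorial) := by ring
end

section
/- Define D̂(k) := 4·sin²(k₁/2) + 4·sin²(k₂/2) for k = (k₁,k₂) ∈ (−π,π)², and define 𝔞 : ℤ² → ℝ by 𝔞(x) := (2π)^{-2} ∫_{(−π,π)²} (1 − cos(k·x))/D̂(k) dk. Define C̃(x,y) := 𝔞(x) + 𝔞(y) − 𝔞(x−y) − (1/8)·(1 − δ_{x,0} − δ_{y,0} + δ_{x,y}) for x, y ∈ ℤ², where δ is the Kronecker delta. Then for every finitely supported v : ℤ² → ℝ, Σ_{x,y∈ℤ²} v(x)·C̃(x,y)·v(y) = (2π)^{-2} ∫_{(−π,π)²} ( 1/D̂(k) − 1/8 ) · |v̂(0)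 − v̂(k)|² dk, where v̂(k) := Σ_{x∈ℤ²} v(x) e^{i k·x}. -/
open MeasureTheory Real

lemma int1d_cos (n : ℤ) : ∫ t in Set.Ioo (-π) π, Real.cos (t * n)
    = if n = 0 then 2 * π else 0 := by
  rcases eq_or_ne n 0 with rfl | hn
  · simp [Real.volume_Ioo]
    rw [max_eq_left (by linarith [pi_pos] : (0:ℝ) ≤ π + π)]
    ring
  · simp only [hn, if_false]
    rw [← integral_Ioc_eq_integral_Ioo,
      ← intervalIntegral.integral_of_le (by linarith [pi_pos] : -π ≤ π)]
    have hc : (n : ℝ) ≠ 0 := Int.cast_ne_zero.mpr hn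
    have : ∀ t : ℝ, Real.cos (t * n) = Real.cos ((n : ℝ) * t) := by
      intro t; rw [mul_comm]
    simp_rw [this]
    rw [intervalIntegral.integral_comp_mul_left (fun y => Real.cos y) hc]
    have h1 : Real.sin ((n:ℝ) * π) = 0 := Real.sin_int_mul_pi n
    have h2 : Real.sin ((n:ℝ) * -π) = 0 := by
      rw [mul_neg, Real.sin_neg, h1, neg_zero]
    simp [h1, h2, mul_comm π]

lemma int1d_sin (n : ℤ) : ∫ t in Set.Ioo (-π) π, Real.sin (t * n) = 0 := by
  rcases eq_or_ne n 0 with rfl | hn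
  · simp
  · rw [← integral_Ioc_eq_integral_Ioo,
      ← intervalIntegral.integral_of_le (by linarith [pi_pos] : -π ≤ π)]
    have hc : (n : ℝ) ≠ 0 := Int.cast_ne_zero.mpr hn
    have : ∀ t : ℝ, Real.sin (t * n) = Real.sin ((n : ℝ) * t) := by
      intro t; rw [mul_comm]
    simp_rw [this]
    rw [intervalIntegral.integral_comp_mul_left (fun y => Real.sin y) hc]
    simp [Real.cos_neg, mul_comm]

lemma box_meas : MeasurableSet (Set.Ioo (-π) π ×ˢ Set.Ioo (-π) π) :=
  measurableSet_Ioo.prod measurableSet_Ioo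

lemma box_vol : volume (Set.Ioo (-π) π ×ˢ Set.Ioo (-π) π)
    = ENNReal.ofReal (π + π) * ENNReal.ofReal (π + π) := by
  rw [Measure.volume_eq_prod, Measure.prod_prod, Real.volume_Ioo]
  norm_num

lemma box_vol_ne_top : volume (Set.Ioo (-π) π ×ˢ Set.Ioo (-π) π) ≠ ⊤ := by
  rw [box_vol]; exact ENNReal.mul_ne_top ENNReal.ofReal_ne_top ENNReal.ofReal_ne_top

-- integrability of bounded measurable functions on box
lemma intOn_of_bdd {f : ℝ × ℝ → ℝ} (hm : Measurable f) (M : ℝ)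
    (hb : ∀ k ∈ (Set.Ioo (-π) π ×ˢ Set.Ioo (-π) π), ‖f k‖ ≤ M) :
    IntegrableOn f (Set.Ioo (-π) π ×ˢ Set.Ioo (-π) π) := by
  apply Measure.integrableOn_of_bounded box_vol_ne_top hm.aestronglyMeasurable
  exact (ae_restrict_iff' box_meas).2 (ae_of_all _ hb)

lemma int2d_F (x : ℤ × ℤ) :
    ∫ k in (Set.Ioo (-π) π ×ˢ Set.Ioo (-π) π),
      (1 - Real.cos (k.1 * (x.1 : ℝ) + k.2 * (x.2 : ℝ)))
    = (2 * π) ^ 2 * (1 - if x = 0 then (1 : ℝ) else 0) := by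
  have hcc : Measurable fun k : ℝ × ℝ => Real.cos (k.1 * (x.1:ℝ)) * Real.cos (k.2 * (x.2:ℝ)) :=
    ((Real.continuous_cos.comp (continuous_fst.mul continuous_const)).mul
      (Real.continuous_cos.comp (continuous_snd.mul continuous_const))).measurable
  have hss : Measurable fun k : ℝ × ℝ => Real.sin (k.1 * (x.1:ℝ)) * Real.sin (k.2 * (x.2:ℝ)) :=
    ((Real.continuous_sin.comp (continuous_fst.mul continuous_const)).mul
      (Real.continuous_sin.comp (continuous_snd.mul continuous_const))).measurable
  have Icc : IntegrableOn (fun k : ℝ × ℝ => Real.cos (k.1 * (x.1:ℝ)) * Real.cos (k.2 * (x.2:ℝ)))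
      (Set.Ioo (-π) π ×ˢ Set.Ioo (-π) π) := by
    apply intOn_of_bdd hcc 1
    intro k _
    rw [Real.norm_eq_abs, abs_mul]
    exact mul_le_one₀ (Real.abs_cos_le_one _) (abs_nonneg _) (Real.abs_cos_le_one _)
  have Iss : IntegrableOn (fun k : ℝ × ℝ => Real.sin (k.1 * (x.1:ℝ)) * Real.sin (k.2 * (x.2:ℝ)))
      (Set.Ioo (-π) π ×ˢ Set.Ioo (-π) π) := by
    apply intOn_of_bdd hss 1
    intro k _
    rw [Real.norm_eq_abs, abs_mul]
    exact mul_le_one₀ (Real.abs_sin_le_one _) (abs_nonneg _) (Real.abs_sin_le_one _)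
  have hsplit : ∀ k : ℝ × ℝ, (1 - Real.cos (k.1 * (x.1 : ℝ) + k.2 * (x.2 : ℝ)))
      = 1 - (Real.cos (k.1 * (x.1:ℝ)) * Real.cos (k.2 * (x.2:ℝ))
            - Real.sin (k.1 * (x.1:ℝ)) * Real.sin (k.2 * (x.2:ℝ))) := by
    intro k; rw [Real.cos_add]
  simp_rw [hsplit]
  have Idiff : IntegrableOn (fun k : ℝ × ℝ => Real.cos (k.1 * (x.1:ℝ)) * Real.cos (k.2 * (x.2:ℝ))
      - Real.sin (k.1 * (x.1:ℝ)) * Real.sin (k.2 * (x.2:ℝ)))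
      (Set.Ioo (-π) π ×ˢ Set.Ioo (-π) π) := Icc.sub Iss
  have I1 : IntegrableOn (fun _ : ℝ × ℝ => (1:ℝ)) (Set.Ioo (-π) π ×ˢ Set.Ioo (-π) π) :=
    integrableOn_const box_vol_ne_top
  rw [integral_sub I1 Idiff,
    integral_sub Icc Iss, setIntegral_const]
  rw [Measure.volume_eq_prod] at *
  rw [setIntegral_prod_mul (fun t : ℝ => Real.cos (t * (x.1:ℝ))) (fun t : ℝ => Real.cos (t * (x.2:ℝ)))]
  rw [setIntegral_prod_mul (fun t : ℝ => Real.sin (t * (x.1:ℝ))) (fun t : ℝ => Real.sin (t * (x.2:ℝ)))]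
  rw [int1d_cos, int1d_cos, int1d_sin, int1d_sin, measureReal_prod_prod, Real.volume_real_Ioo]
  norm_num
  rw [max_eq_left (by linarith [pi_pos] : (0:ℝ) ≤ π + π)]
  rcases eq_or_ne x 0 with rfl | hx
  · simp; ring
  · have : ¬(x.1 = 0 ∧ x.2 = 0) := by
      intro h; exact hx (Prod.ext h.1 h.2)
    rcases Decidable.em (x.1 = 0) with h1 | h1
    · have h2 : x.2 ≠ 0 := fun h => this ⟨h1, h⟩
      simp [h1, h2, hx]; ring
    · simp [h1, hx]; ring

set_option maxHeartbeats 800000 in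
lemma Fdiv_bound (Dhat : ℝ × ℝ → ℝ)
    (hDhat : ∀ k : ℝ × ℝ, Dhat k = 4 * Real.sin (k.1 / 2) ^ 2 + 4 * Real.sin (k.2 / 2) ^ 2)
    (x : ℤ × ℤ) (k : ℝ × ℝ) (hk : k ∈ Set.Ioo (-π) π ×ˢ Set.Ioo (-π) π) :
    ‖(1 - Real.cos (k.1 * (x.1 : ℝ) + k.2 * (x.2 : ℝ))) / Dhat k‖
      ≤ π ^ 2 * ((x.1:ℝ)^2 + (x.2:ℝ)^2) / 8 := by
  obtain ⟨⟨h1a, h1b⟩, h2a, h2b⟩ := hk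
  set s : ℝ := k.1 * (x.1:ℝ) + k.2 * (x.2:ℝ) with hs
  set X : ℝ := (x.1:ℝ)^2 + (x.2:ℝ)^2 with hX
  have hX0 : 0 ≤ X := by positivity
  have hπ : 0 < π := pi_pos
  have hnum0 : 0 ≤ 1 - Real.cos s := by linarith [Real.cos_le_one s]
  have hnum : 1 - Real.cos s ≤ s ^ 2 / 2 := by
    linarith [Real.one_sub_sq_div_two_le_cos (x := s)]
  have hsq : s ^ 2 ≤ (k.1 ^ 2 + k.2 ^ 2) * X := by
    rw [hs, hX]
    nlinarith [sq_nonneg (k.1 * (x.2:ℝ) - k.2 * (x.1:ℝ))]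
  have hD0 : 0 ≤ Dhat k := by rw [hDhat]; positivity
  have hDlb : 4 * (k.1 ^ 2 + k.2 ^ 2) ≤ π ^ 2 * Dhat k := by
    have c1 : Real.cos k.1 ≤ 1 - 2 / π ^ 2 * k.1 ^ 2 :=
      Real.cos_le_one_sub_mul_cos_sq (abs_le.2 ⟨h1a.le, h1b.le⟩)
    have c2 : Real.cos k.2 ≤ 1 - 2 / π ^ 2 * k.2 ^ 2 :=
      Real.cos_le_one_sub_mul_cos_sq (abs_le.2 ⟨h2a.le, h2b.le⟩)
    have e1 : 4 * Real.sin (k.1 / 2) ^ 2 = 2 - 2 * Real.cos k.1 := by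
      have := Real.sin_sq_eq_half_sub (k.1 / 2)
      rw [this]; ring_nf
    have e2 : 4 * Real.sin (k.2 / 2) ^ 2 = 2 - 2 * Real.cos k.2 := by
      have := Real.sin_sq_eq_half_sub (k.2 / 2)
      rw [this]; ring_nf
    rw [hDhat, e1, e2]
    have hπ2 : (0:ℝ) < π ^ 2 := by positivity
    have hident : ∀ t : ℝ, π ^ 2 * (2 / π ^ 2 * t) = 2 * t := by
      intro t; field_simp
    have d1 : 2 * k.1 ^ 2 ≤ π ^ 2 * (1 - Real.cos k.1) := by
      nlinarith [mul_le_mul_of_nonneg_left c1 hπ2.le, hident (k.1 ^ 2)]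
    have d2 : 2 * k.2 ^ 2 ≤ π ^ 2 * (1 - Real.cos k.2) := by
      nlinarith [mul_le_mul_of_nonneg_left c2 hπ2.le, hident (k.2 ^ 2)]
    nlinarith
  clear_value s X
  rw [Real.norm_eq_abs, abs_of_nonneg (div_nonneg hnum0 hD0)]
  rcases eq_or_lt_of_le hD0 with hD | hD
  · have hq : k.1 ^ 2 + k.2 ^ 2 ≤ 0 := by nlinarith
    have hk1 : k.1 = 0 := by nlinarith [sq_nonneg k.1, sq_nonneg k.2]
    have hk2 : k.2 = 0 := by nlinarith [sq_nonneg k.1, sq_nonneg k.2]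
    have : s = 0 := by rw [hs, hk1, hk2]; ring
    rw [this]
    simp only [Real.cos_zero, sub_self, zero_div]
    positivity
  · rw [div_le_iff₀ hD]
    have key : π ^ 2 * X * Dhat k ≥ 4 * (k.1 ^ 2 + k.2 ^ 2) * X := by
      nlinarith [mul_le_mul_of_nonneg_right hDlb hX0]
    nlinarith [key, hnum, hsq]

lemma Fdiv_integrable (Dhat : ℝ × ℝ → ℝ)
    (hDhat : ∀ k : ℝ × ℝ, Dhat k = 4 * Real.sin (k.1 / 2) ^ 2 + 4 * Real.sin (k.2 / 2) ^ 2)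
    (x : ℤ × ℤ) :
    IntegrableOn (fun k : ℝ × ℝ =>
      (1 - Real.cos (k.1 * (x.1 : ℝ) + k.2 * (x.2 : ℝ))) / Dhat k)
      (Set.Ioo (-π) π ×ˢ Set.Ioo (-π) π) := by
  have hDm : Measurable Dhat := by
    have : Dhat = fun k : ℝ × ℝ => 4 * Real.sin (k.1 / 2) ^ 2 + 4 * Real.sin (k.2 / 2) ^ 2 :=
      funext hDhat
    rw [this]
    fun_prop
  have hm : Measurable (fun k : ℝ × ℝ =>
      (1 - Real.cos (k.1 * (x.1 : ℝ) + k.2 * (x.2 : ℝ))) / Dhat k) := by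
    apply Measurable.div _ hDm
    fun_prop
  exact intOn_of_bdd hm _ (Fdiv_bound Dhat hDhat x)

lemma F_integrable (x : ℤ × ℤ) :
    IntegrableOn (fun k : ℝ × ℝ => (1 - Real.cos (k.1 * (x.1 : ℝ) + k.2 * (x.2 : ℝ))))
      (Set.Ioo (-π) π ×ˢ Set.Ioo (-π) π) := by
  apply intOn_of_bdd (by fun_prop) 2
  intro k _
  rw [Real.norm_eq_abs, abs_le]
  constructor <;> nlinarith [Real.cos_le_one (k.1 * (x.1:ℝ) + k.2 * (x.2:ℝ)),
    Real.neg_one_le_cos (k.1 * (x.1:ℝ) + k.2 * (x.2:ℝ))]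

lemma abs_sq_expand (v : (ℤ × ℤ) →₀ ℝ) (vhat : ℝ × ℝ → ℂ)
    (hvhat : ∀ k : ℝ × ℝ, vhat k = ∑ x ∈ v.support,
      (v x : ℂ) * Complex.exp (Complex.I * ((k.1 : ℂ) * (x.1 : ℂ) + (k.2 : ℂ) * (x.2 : ℂ))))
    (k : ℝ × ℝ) :
    (‖vhat 0 - vhat k‖ : ℝ) ^ 2
      = ∑ x ∈ v.support, ∑ y ∈ v.support, v x * v y *
          ((1 - Real.cos (k.1 * ((x.1:ℤ):ℝ) + k.2 * ((x.2:ℤ):ℝ)))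
           + (1 - Real.cos (k.1 * ((y.1:ℤ):ℝ) + k.2 * ((y.2:ℤ):ℝ)))
           - (1 - Real.cos (k.1 * (((x-y).1:ℤ):ℝ) + k.2 * (((x-y).2:ℤ):ℝ)))) := by
  set θ : ℤ × ℤ → ℝ := fun x => k.1 * ((x.1:ℤ):ℝ) + k.2 * ((x.2:ℤ):ℝ) with hθ
  have hterm : ∀ x : ℤ × ℤ,
      ((v x : ℂ) * Complex.exp (Complex.I * ((k.1 : ℂ) * ((x.1:ℤ) : ℂ) + (k.2 : ℂ) * ((x.2:ℤ) : ℂ))))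
        = Complex.ofReal (v x * Real.cos (θ x)) + Complex.ofReal (v x * Real.sin (θ x)) * Complex.I := by
    intro x
    have hc : ((k.1 : ℂ) * ((x.1:ℤ) : ℂ) + (k.2 : ℂ) * ((x.2:ℤ) : ℂ)) = ((θ x : ℝ) : ℂ) := by
      rw [hθ]; push_cast; ring
    rw [hc, mul_comm Complex.I, Complex.exp_mul_I]
    apply Complex.ext <;>
      simp [Complex.cos_ofReal_re, Complex.sin_ofReal_re]
  have h0 : vhat 0 = Complex.ofReal (∑ x ∈ v.support, v x) := by
    rw [hvhat]
    push_cast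
    apply Finset.sum_congr rfl
    intro x _
    norm_num
  have hre : (vhat 0 - vhat k).re = ∑ x ∈ v.support, v x * (1 - Real.cos (θ x)) := by
    rw [Complex.sub_re, h0, hvhat]
    simp_rw [hterm]
    rw [Complex.re_sum]
    simp [mul_sub, Finset.sum_sub_distrib, Complex.cos_ofReal_re]
  have him : (vhat 0 - vhat k).im = ∑ x ∈ v.support, -(v x * Real.sin (θ x)) := by
    rw [Complex.sub_im, h0, hvhat]
    simp_rw [hterm]
    rw [Complex.im_sum]
    simp [Complex.sin_ofReal_re]
  rw [Complex.sq_norm, Complex.normSq_apply, hre, him]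
  rw [Finset.sum_mul_sum, Finset.sum_mul_sum, ← Finset.sum_add_distrib]
  apply Finset.sum_congr rfl; intro x _
  rw [← Finset.sum_add_distrib]
  apply Finset.sum_congr rfl; intro y _
  have e1 : (x - y).1 = x.1 - y.1 := rfl
  have e2 : (x - y).2 = x.2 - y.2 := rfl
  have hxy : k.1 * (((x - y).1 : ℤ) : ℝ) + k.2 * (((x - y).2 : ℤ) : ℝ) = θ x - θ y := by
    rw [hθ]; simp only [e1, e2]; push_cast; ring
  rw [hxy, Real.cos_sub]
  simp only [hθ]
  ring

lemma int_six {B : Set (ℝ × ℝ)} {f1 f2 f3 f4 f5 f6 : ℝ × ℝ → ℝ} (c1 c2 : ℝ)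
    (h1 : IntegrableOn f1 B) (h2 : IntegrableOn f2 B) (h3 : IntegrableOn f3 B)
    (h4 : IntegrableOn f4 B) (h5 : IntegrableOn f5 B) (h6 : IntegrableOn f6 B) :
    ∫ k in B, (c1 * f1 k + c1 * f2 k - c1 * f3 k - c2 * f4 k - c2 * f5 k + c2 * f6 k)
      = c1 * (∫ k in B, f1 k) + c1 * (∫ k in B, f2 k) - c1 * (∫ k in B, f3 k)
        - c2 * (∫ k in B, f4 k) - c2 * (∫ k in B, f5 k) + c2 * (∫ k in B, f6 k) := by
  have H2 : IntegrableOn (fun k => c1 * f1 k + c1 * f2 k) B :=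
    (h1.const_mul c1).add (h2.const_mul c1)
  have H3 : IntegrableOn (fun k => c1 * f1 k + c1 * f2 k - c1 * f3 k) B :=
    H2.sub (h3.const_mul c1)
  have H4 : IntegrableOn (fun k => c1 * f1 k + c1 * f2 k - c1 * f3 k - c2 * f4 k) B :=
    H3.sub (h4.const_mul c2)
  have H5 : IntegrableOn (fun k => c1 * f1 k + c1 * f2 k - c1 * f3 k - c2 * f4 k - c2 * f5 k) B :=
    H4.sub (h5.const_mul c2)
  rw [integral_add H5 (h6.const_mul c2), integral_sub H4 (h5.const_mul c2),
    integral_sub H3 (h4.const_mul c2), integral_sub H2 (h3.const_mul c1),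
    integral_add (h1.const_mul c1) (h2.const_mul c1),
    integral_const_mul, integral_const_mul, integral_const_mul, integral_const_mul,
    integral_const_mul, integral_const_mul]

/-- key computation in Lemma 8.4: the quadratic form of the kernel
`C̃(x,y) = 𝔞(x) + 𝔞(y) − 𝔞(x−y) − ⅛(1 − δ_{x,0} − δ_{y,0} + δ_{x,y})` on `ℤ²` equals
`(2π)^{-2} ∫_{(−π,π)²} (1/D̂(k) − 1/8) |v̂(0) − v̂(k)|² dk`. -/
theorem statement8
    (Dhat : ℝ × ℝ → ℝ)
    (hDhat : ∀ k : ℝ × ℝ, Dhat k = 4 * Real.sin (k.1 / 2) ^ 2 + 4 * Real.sin (k.2 / 2) ^ 2)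
    (a : ℤ × ℤ → ℝ)
    (ha : ∀ x : ℤ × ℤ, a x = (2 * Real.pi) ^ (-2 : ℤ) *
      ∫ k in (Set.Ioo (-Real.pi) Real.pi ×ˢ Set.Ioo (-Real.pi) Real.pi),
        (1 - Real.cos (k.1 * (x.1 : ℝ) + k.2 * (x.2 : ℝ))) / Dhat k)
    (Ct : ℤ × ℤ → ℤ × ℤ → ℝ)
    (hCt : ∀ x y : ℤ × ℤ, Ct x y = a x + a y - a (x - y)
      - (1 / 8) * (1 - (if x = 0 then (1 : ℝ) else 0) - (if y = 0 then (1 : ℝ) else 0)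
          + (if x = y then (1 : ℝ) else 0)))
    (v : (ℤ × ℤ) →₀ ℝ)
    (vhat : ℝ × ℝ → ℂ)
    (hvhat : ∀ k : ℝ × ℝ, vhat k = ∑ x ∈ v.support,
      (v x : ℂ) * Complex.exp (Complex.I * ((k.1 : ℂ) * (x.1 : ℂ) + (k.2 : ℂ) * (x.2 : ℂ)))) :
    ∑ x ∈ v.support, ∑ y ∈ v.support, v x * Ct x y * v y
      = (2 * Real.pi) ^ (-2 : ℤ) *
        ∫ k in (Set.Ioo (-Real.pi) Real.pi ×ˢ Set.Ioo (-Real.pi) Real.pi),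
          (1 / Dhat k - 1 / 8) * ‖vhat 0 - vhat k‖ ^ 2 := by
  have hT : ∀ x y : ℤ × ℤ, IntegrableOn (fun k : ℝ × ℝ =>
      v x * v y * ((1 - Real.cos (k.1 * ((x.1 : ℤ) : ℝ) + k.2 * ((x.2 : ℤ) : ℝ))) / Dhat k) + v x * v y * ((1 - Real.cos (k.1 * ((y.1 : ℤ) : ℝ) + k.2 * ((y.2 : ℤ) : ℝ))) / Dhat k)
          - v x * v y * ((1 - Real.cos (k.1 * (((x - y).1 : ℤ) : ℝ) + k.2 * (((x - y).2 : ℤ) : ℝ))) / Dhat k)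
          - v x * v y / 8 * (1 - Real.cos (k.1 * ((x.1 : ℤ) : ℝ) + k.2 * ((x.2 : ℤ) : ℝ))) - v x * v y / 8 * (1 - Real.cos (k.1 * ((y.1 : ℤ) : ℝ) + k.2 * ((y.2 : ℤ) : ℝ)))
          + v x * v y / 8 * (1 - Real.cos (k.1 * (((x - y).1 : ℤ) : ℝ) + k.2 * (((x - y).2 : ℤ) : ℝ))))
      (Set.Ioo (-π) π ×ˢ Set.Ioo (-π) π) := by
    intro x y
    exact ((((((Fdiv_integrable Dhat hDhat x).const_mul _).add
      ((Fdiv_integrable Dhat hDhat y).const_mul _)).sub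
      ((Fdiv_integrable Dhat hDhat (x - y)).const_mul _)).sub
      ((F_integrable x).const_mul _)).sub
      ((F_integrable y).const_mul _)).add
      ((F_integrable (x - y)).const_mul _)
  have hpt : ∀ k : ℝ × ℝ, (1 / Dhat k - 1 / 8) * ‖vhat 0 - vhat k‖ ^ 2
      = ∑ x ∈ v.support, ∑ y ∈ v.support,
        (v x * v y * ((1 - Real.cos (k.1 * ((x.1 : ℤ) : ℝ) + k.2 * ((x.2 : ℤ) : ℝ))) / Dhat k) + v x * v y * ((1 - Real.cos (k.1 * ((y.1 : ℤ) : ℝ) + k.2 * ((y.2 : ℤ) : ℝ))) / Dhat k)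
          - v x * v y * ((1 - Real.cos (k.1 * (((x - y).1 : ℤ) : ℝ) + k.2 * (((x - y).2 : ℤ) : ℝ))) / Dhat k)
          - v x * v y / 8 * (1 - Real.cos (k.1 * ((x.1 : ℤ) : ℝ) + k.2 * ((x.2 : ℤ) : ℝ))) - v x * v y / 8 * (1 - Real.cos (k.1 * ((y.1 : ℤ) : ℝ) + k.2 * ((y.2 : ℤ) : ℝ)))
          + v x * v y / 8 * (1 - Real.cos (k.1 * (((x - y).1 : ℤ) : ℝ) + k.2 * (((x - y).2 : ℤ) : ℝ)))) := by
    intro k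
    rw [abs_sq_expand v vhat hvhat k, Finset.mul_sum]
    apply Finset.sum_congr rfl; intro x _
    rw [Finset.mul_sum]
    apply Finset.sum_congr rfl; intro y _
    rw [div_eq_mul_inv (1:ℝ) (Dhat k), div_eq_mul_inv, div_eq_mul_inv, div_eq_mul_inv]
    ring
  rw [MeasureTheory.integral_congr_ae (ae_of_all _ hpt)]
  rw [MeasureTheory.integral_finset_sum _ (fun x _ => integrable_finset_sum _ (fun y _ => hT x y))]
  rw [Finset.mul_sum]
  apply Finset.sum_congr rfl; intro x _
  rw [MeasureTheory.integral_finset_sum _ (fun y _ => hT x y), Finset.mul_sum]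
  apply Finset.sum_congr rfl; intro y _
  rw [int_six (v x * v y) (v x * v y / 8)
    (Fdiv_integrable Dhat hDhat x) (Fdiv_integrable Dhat hDhat y)
    (Fdiv_integrable Dhat hDhat (x - y))
    (F_integrable x) (F_integrable y) (F_integrable (x - y))]
  rw [int2d_F x, int2d_F y, int2d_F (x - y)]
  rw [hCt, ha x, ha y, ha (x - y)]
  have hxy0 : (if x - y = 0 then (1:ℝ) else 0) = (if x = y then (1:ℝ) else 0) := by
    simp [sub_eq_zero]
  rw [hxy0]
  have hc2 : (2 * π : ℝ) ^ (-2 : ℤ) * (2 * π) ^ 2 = 1 := by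
    have h1 : ((2 * π : ℝ) ^ (-2 : ℤ)) = ((2 * π) ^ 2)⁻¹ := by
      rw [zpow_neg]; norm_cast
    rw [h1, inv_mul_cancel₀ (by positivity : ((2 * π : ℝ) ^ 2) ≠ 0)]
  set c : ℝ := (2 * π) ^ (-2 : ℤ) with hc
  set I1 := ∫ k in (Set.Ioo (-π) π ×ˢ Set.Ioo (-π) π), (1 - Real.cos (k.1 * ((x.1 : ℤ) : ℝ) + k.2 * ((x.2 : ℤ) : ℝ))) / Dhat k with hI1
  set I2 := ∫ k in (Set.Ioo (-π) π ×ˢ Set.Ioo (-π) π), (1 - Real.cos (k.1 * ((y.1 : ℤ) : ℝ) + k.2 * ((y.2 : ℤ) : ℝ))) / Dhat k with hI2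
  set I3 := ∫ k in (Set.Ioo (-π) π ×ˢ Set.Ioo (-π) π), (1 - Real.cos (k.1 * (((x - y).1 : ℤ) : ℝ) + k.2 * (((x - y).2 : ℤ) : ℝ))) / Dhat k with hI3
  set d1 := (if x = 0 then (1:ℝ) else 0) with hd1
  set d2 := (if y = 0 then (1:ℝ) else 0) with hd2
  set d3 := (if x = y then (1:ℝ) else 0) with hd3
  clear_value c I1 I2 I3 d1 d2 d3
  linear_combination (v x * v y / 8) * (1 - d1 - d2 + d3) * hc2
end

section
/- Define D̂(k) := 4·sin²(k₁/2) + 4·sin²(k₂/2) for k = (k₁,k₂) ∈ (−π,π)², and define 𝔞 : ℤ² → ℝ by 𝔞(x) := (2π)^{-2} ∫_{(−π,π)²} (1 − cos(k·x))/D̂(k) dk. Define C̃(x,y) := 𝔞(x) + 𝔞(y) − 𝔞(x−y) − (1/8)·(1 − δ_{x,0} − δ_{y,0} + δ_{x,y}) for x, y ∈ ℤ², where δ is the Kronecker delta. Then C̃ is a symmetric positive semidefinite kernel on ℤ²: C̃(x,y) = C̃(y,x) for all x,y, and Σ_{x,y∈ℤ²} v(x)·C̃(x,y)·v(y) ≥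 0 for every finitely supported v : ℤ² → ℝ. -/
open MeasureTheory

open Real

private lemma aux_abs_sin_nat (n : ℕ) (t : ℝ) : |Real.sin (n * t)| ≤ n * |Real.sin t| := by
  induction n with
  | zero => simp
  | succ n ih =>
      have : ((n : ℝ) + 1) * t = n * t + t := by ring
      push_cast
      rw [this, Real.sin_add]
      calc |Real.sin (n*t) * Real.cos t + Real.cos (n*t) * Real.sin t|
          ≤ |Real.sin (n*t) * Real.cos t| + |Real.cos (n*t) * Real.sin t| := abs_add_le _ _
        _ ≤ |Real.sin (n*t)| * 1 + 1 * |Real.sin t| := by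
            rw [abs_mul, abs_mul]
            gcongr <;> exact Real.abs_cos_le_one _
        _ ≤ n * |Real.sin t| + 1 * |Real.sin t| := by rw [mul_one]; gcongr
        _ = (n+1) * |Real.sin t| := by ring

private lemma aux_abs_sin_int (n : ℤ) (t : ℝ) : |Real.sin (n * t)| ≤ |(n:ℝ)| * |Real.sin t| := by
  rcases le_or_gt 0 n with h | h
  · lift n to ℕ using h
    simpa using aux_abs_sin_nat n t
  · have : ((-n).toNat : ℝ) = -n := by
      have : 0 ≤ -n := by omega
      exact_mod_cast Int.toNat_of_nonneg this
    calc |Real.sin (n*t)| = |Real.sin (((-n).toNat : ℝ) * t)| := by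
          rw [this]; rw [show (-(n:ℝ)) * t = -(n*t) by ring, Real.sin_neg, abs_neg]
      _ ≤ ((-n).toNat : ℝ) * |Real.sin t| := aux_abs_sin_nat _ t
      _ = |(n:ℝ)| * |Real.sin t| := by
          rw [this, abs_of_neg (show (n:ℝ) < 0 by exact_mod_cast h)]

private lemma aux_one_sub_cos (x : ℝ) : 1 - Real.cos x = 2 * Real.sin (x / 2) ^ 2 := by
  have h1 : Real.cos x = Real.cos (2 * (x / 2)) := by ring_nf
  rw [h1, Real.cos_two_mul']
  have h2 := Real.sin_sq_add_cos_sq (x / 2)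
  linarith

private lemma aux_cos_bound (z : ℤ × ℤ) (k : ℝ × ℝ) :
    1 - Real.cos (k.1 * (z.1 : ℝ) + k.2 * (z.2 : ℝ)) ≤
      ((z.1:ℝ)^2 + (z.2:ℝ)^2) * (4 * Real.sin (k.1 / 2) ^ 2 + 4 * Real.sin (k.2 / 2) ^ 2) := by
  set m : ℝ := (z.1 : ℝ)
  set n : ℝ := (z.2 : ℝ)
  set A : ℝ := k.1 / 2
  set B : ℝ := k.2 / 2
  have harg : (k.1 * m + k.2 * n) / 2 = m * A + n * B := by
    simp only [A, B]; ring
  rw [aux_one_sub_cos, harg]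
  have key : |Real.sin (m * A + n * B)| ≤ |m| * |Real.sin A| + |n| * |Real.sin B| := by
    calc |Real.sin (m * A + n * B)|
        = |Real.sin (m*A) * Real.cos (n*B) + Real.cos (m*A) * Real.sin (n*B)| := by
          rw [Real.sin_add]
      _ ≤ |Real.sin (m*A) * Real.cos (n*B)| + |Real.cos (m*A) * Real.sin (n*B)| := abs_add_le _ _
      _ ≤ |Real.sin (m*A)| * 1 + 1 * |Real.sin (n*B)| := by
          rw [abs_mul, abs_mul]
          gcongr <;> exact Real.abs_cos_le_one _
      _ ≤ |m| * |Real.sin A| + |n| * |Real.sin B| := by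
          rw [mul_one, one_mul]
          exact add_le_add (aux_abs_sin_int z.1 A) (aux_abs_sin_int z.2 B)
  have h3 : Real.sin (m * A + n * B) ^ 2 ≤ (|m| * |Real.sin A| + |n| * |Real.sin B|) ^ 2 := by
    rw [← sq_abs]
    exact pow_le_pow_left₀ (abs_nonneg _) key 2
  have h4 : (|m| * |Real.sin A| + |n| * |Real.sin B|) ^ 2
      ≤ 2 * (m^2 * Real.sin A ^ 2) + 2 * (n^2 * Real.sin B ^ 2) := by
    have e1 : (|m| * |Real.sin A|) ^ 2 = m^2 * Real.sin A ^ 2 := by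
      rw [mul_pow, sq_abs, sq_abs]
    have e2 : (|n| * |Real.sin B|) ^ 2 = n^2 * Real.sin B ^ 2 := by
      rw [mul_pow, sq_abs, sq_abs]
    nlinarith [sq_nonneg (|m| * |Real.sin A| - |n| * |Real.sin B|)]
  nlinarith [mul_nonneg (sq_nonneg m) (sq_nonneg (Real.sin B)),
    mul_nonneg (sq_nonneg n) (sq_nonneg (Real.sin A))]

private lemma aux_box_finite :
    volume (Set.Ioo (-Real.pi) Real.pi ×ˢ Set.Ioo (-Real.pi) Real.pi) < ⊤ := by
  rw [MeasureTheory.Measure.volume_eq_prod, MeasureTheory.Measure.prod_prod, Real.volume_Ioo]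
  exact ENNReal.mul_lt_top ENNReal.ofReal_lt_top ENNReal.ofReal_lt_top

private lemma aux_intOn_bdd {f : ℝ × ℝ → ℝ} (hf : Measurable f) (M : ℝ)
    (hM : ∀ k, |f k| ≤ M) :
    IntegrableOn f (Set.Ioo (-Real.pi) Real.pi ×ˢ Set.Ioo (-Real.pi) Real.pi) volume := by
  refine Integrable.mono' (g := fun _ => M)
    (integrableOn_const aux_box_finite.ne) hf.aestronglyMeasurable
    (ae_of_all _ fun k => ?_)
  simpa using hM k

private lemma aux_integrable_div (z : ℤ × ℤ) :
    IntegrableOn (fun k : ℝ × ℝ => (1 - Real.cos (k.1 * (z.1 : ℝ) + k.2 * (z.2 : ℝ))) /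
      (4 * Real.sin (k.1 / 2) ^ 2 + 4 * Real.sin (k.2 / 2) ^ 2))
      (Set.Ioo (-Real.pi) Real.pi ×ˢ Set.Ioo (-Real.pi) Real.pi) volume := by
  refine aux_intOn_bdd (Measurable.div (by fun_prop) (by fun_prop))
    ((z.1:ℝ)^2 + (z.2:ℝ)^2) fun k => ?_
  · 
    have hDnn : (0:ℝ) ≤ 4 * Real.sin (k.1 / 2) ^ 2 + 4 * Real.sin (k.2 / 2) ^ 2 := by positivity
    have hnum : 0 ≤ 1 - Real.cos (k.1 * (z.1 : ℝ) + k.2 * (z.2 : ℝ)) := by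
      have := Real.cos_le_one (k.1 * (z.1 : ℝ) + k.2 * (z.2 : ℝ)); linarith
    have hMnn : (0:ℝ) ≤ (z.1:ℝ)^2 + (z.2:ℝ)^2 := by positivity
    rw [abs_of_nonneg (div_nonneg hnum hDnn)]
    rcases eq_or_lt_of_le hDnn with h | h
    · rw [← h, div_zero]; exact hMnn
    · rw [div_le_iff₀ h]
      exact aux_cos_bound z k

private lemma aux_integrable_cos (z : ℤ × ℤ) :
    IntegrableOn (fun k : ℝ × ℝ => 1 - Real.cos (k.1 * (z.1 : ℝ) + k.2 * (z.2 : ℝ)))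
      (Set.Ioo (-Real.pi) Real.pi ×ˢ Set.Ioo (-Real.pi) Real.pi) volume := by
  apply aux_intOn_bdd (by fun_prop) 2
  intro k
  have h1 := Real.cos_le_one (k.1 * (z.1 : ℝ) + k.2 * (z.2 : ℝ))
  have h2 := Real.neg_one_le_cos (k.1 * (z.1 : ℝ) + k.2 * (z.2 : ℝ))
  rw [abs_le]; constructor <;> linarith

private lemma aux_int_cos (n : ℤ) :
    ∫ t in Set.Ioo (-Real.pi) Real.pi, Real.cos (t * (n : ℝ)) =
      if n = 0 then 2 * Real.pi else 0 := by
  have hle : -Real.pi ≤ Real.pi := by linarith [Real.pi_pos]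
  rw [← MeasureTheory.integral_Ioc_eq_integral_Ioo, ← intervalIntegral.integral_of_le hle]
  by_cases hn : n = 0
  · simp [hn, two_mul]
  · simp only [hn, if_false]
    have hc : (n : ℝ) ≠ 0 := Int.cast_ne_zero.mpr hn
    have h := intervalIntegral.mul_integral_comp_mul_right (a := -Real.pi) (b := Real.pi)
      (f := Real.cos) (c := (n : ℝ))
    rw [integral_cos] at h
    have hs1 : Real.sin (Real.pi * (n:ℝ)) = 0 := by
      rw [mul_comm]; exact Real.sin_int_mul_pi n
    have hs2 : Real.sin (-Real.pi * (n:ℝ)) = 0 := by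
      rw [show -Real.pi * (n:ℝ) = -(Real.pi * n) by ring, Real.sin_neg, hs1, neg_zero]
    rw [hs1, hs2, sub_zero] at h
    exact (mul_eq_zero.mp h).resolve_left hc

private lemma aux_int_sin (n : ℤ) :
    ∫ t in Set.Ioo (-Real.pi) Real.pi, Real.sin (t * (n : ℝ)) = 0 := by
  have hle : -Real.pi ≤ Real.pi := by linarith [Real.pi_pos]
  rw [← MeasureTheory.integral_Ioc_eq_integral_Ioo, ← intervalIntegral.integral_of_le hle]
  by_cases hn : n = 0
  · simp [hn]
  · have hc : (n : ℝ) ≠ 0 := Int.cast_ne_zero.mpr hn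
    have h := intervalIntegral.mul_integral_comp_mul_right (a := -Real.pi) (b := Real.pi)
      (f := Real.sin) (c := (n : ℝ))
    rw [integral_sin] at h
    rw [show -Real.pi * (n:ℝ) = -(Real.pi * n) by ring, Real.cos_neg, sub_self] at h
    exact (mul_eq_zero.mp h).resolve_left hc

private lemma aux_box_int (z : ℤ × ℤ) :
    ∫ k in (Set.Ioo (-Real.pi) Real.pi ×ˢ Set.Ioo (-Real.pi) Real.pi),
      (1 - Real.cos (k.1 * (z.1 : ℝ) + k.2 * (z.2 : ℝ))) =
    (2 * Real.pi) ^ 2 * (1 - if z = 0 then 1 else 0) := by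
  have hfun : (fun k : ℝ × ℝ => 1 - Real.cos (k.1 * (z.1 : ℝ) + k.2 * (z.2 : ℝ))) =
      fun k : ℝ × ℝ => (1 - Real.cos (k.1 * (z.1:ℝ)) * Real.cos (k.2 * (z.2:ℝ)))
        + Real.sin (k.1 * (z.1:ℝ)) * Real.sin (k.2 * (z.2:ℝ)) := by
    funext k
    rw [Real.cos_add]
    ring
  rw [hfun]
  have i2 : IntegrableOn (fun k : ℝ × ℝ => Real.cos (k.1 * (z.1:ℝ)) * Real.cos (k.2 * (z.2:ℝ)))
      (Set.Ioo (-Real.pi) Real.pi ×ˢ Set.Ioo (-Real.pi) Real.pi) volume := by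
    refine aux_intOn_bdd (by fun_prop) 1 fun k => ?_
    rw [abs_mul]
    exact mul_le_one₀ (Real.abs_cos_le_one _) (abs_nonneg _) (Real.abs_cos_le_one _)
  have i3 : IntegrableOn (fun k : ℝ × ℝ => Real.sin (k.1 * (z.1:ℝ)) * Real.sin (k.2 * (z.2:ℝ)))
      (Set.Ioo (-Real.pi) Real.pi ×ˢ Set.Ioo (-Real.pi) Real.pi) volume := by
    refine aux_intOn_bdd (by fun_prop) 1 fun k => ?_
    rw [abs_mul]
    exact mul_le_one₀ (Real.abs_sin_le_one _) (abs_nonneg _) (Real.abs_sin_le_one _)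
  have i1 : IntegrableOn (fun _ : ℝ × ℝ => (1:ℝ))
      (Set.Ioo (-Real.pi) Real.pi ×ˢ Set.Ioo (-Real.pi) Real.pi) volume :=
    integrableOn_const aux_box_finite.ne
  have i12 : IntegrableOn (fun k : ℝ × ℝ => 1 - Real.cos (k.1 * (z.1:ℝ)) * Real.cos (k.2 * (z.2:ℝ)))
      (Set.Ioo (-Real.pi) Real.pi ×ˢ Set.Ioo (-Real.pi) Real.pi) volume := i1.sub i2
  rw [MeasureTheory.integral_add i12 i3, MeasureTheory.integral_sub i1 i2]
  have e1 : ∫ _ in (Set.Ioo (-Real.pi) Real.pi ×ˢ Set.Ioo (-Real.pi) Real.pi), (1:ℝ) =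
      (2 * Real.pi)^2 := by
    rw [MeasureTheory.setIntegral_const, smul_eq_mul, mul_one,
      MeasureTheory.Measure.volume_eq_prod, measureReal_def, MeasureTheory.Measure.prod_prod, Real.volume_Ioo,
      ← ENNReal.ofReal_mul (by linarith [Real.pi_pos]),
      ENNReal.toReal_ofReal (by nlinarith [Real.pi_pos])]
    ring
  have e2 : ∫ k in (Set.Ioo (-Real.pi) Real.pi ×ˢ Set.Ioo (-Real.pi) Real.pi),
      Real.cos (k.1 * (z.1:ℝ)) * Real.cos (k.2 * (z.2:ℝ)) =
      (if z.1 = 0 then 2*Real.pi else 0) * (if z.2 = 0 then 2*Real.pi else 0) := by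
    rw [MeasureTheory.Measure.volume_eq_prod,
      MeasureTheory.setIntegral_prod_mul (fun t => Real.cos (t * (z.1:ℝ)))
        (fun t => Real.cos (t * (z.2:ℝ))), aux_int_cos, aux_int_cos]
  have e3 : ∫ k in (Set.Ioo (-Real.pi) Real.pi ×ˢ Set.Ioo (-Real.pi) Real.pi),
      Real.sin (k.1 * (z.1:ℝ)) * Real.sin (k.2 * (z.2:ℝ)) = 0 := by
    rw [MeasureTheory.Measure.volume_eq_prod,
      MeasureTheory.setIntegral_prod_mul (fun t => Real.sin (t * (z.1:ℝ)))
        (fun t => Real.sin (t * (z.2:ℝ))), aux_int_sin, aux_int_sin, mul_zero]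
  rw [e1, e2, e3]
  by_cases h : z = 0
  · subst h
    simp only [Prod.fst_zero, Prod.snd_zero, if_pos rfl]
    norm_num
    ring
  · have h' : ¬(z.1 = 0 ∧ z.2 = 0) := by
      intro ⟨h1, h2⟩; exact h (Prod.ext h1 h2)
    simp only [h, if_false]
    rcases not_and_or.mp h' with h1 | h2
    · simp only [h1, if_false]; ring
    · simp only [h2, if_false]; ring

private noncomputable def auxD (k : ℝ × ℝ) : ℝ :=
  4 * Real.sin (k.1 / 2) ^ 2 + 4 * Real.sin (k.2 / 2) ^ 2

private noncomputable def auxI (z : ℤ × ℤ) : ℝ :=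
  ∫ k in (Set.Ioo (-Real.pi) Real.pi ×ˢ Set.Ioo (-Real.pi) Real.pi),
    (1 - Real.cos (k.1 * (z.1 : ℝ) + k.2 * (z.2 : ℝ))) / auxD k

private noncomputable def auxJ (z : ℤ × ℤ) : ℝ :=
  ∫ k in (Set.Ioo (-Real.pi) Real.pi ×ˢ Set.Ioo (-Real.pi) Real.pi),
    (1 - Real.cos (k.1 * (z.1 : ℝ) + k.2 * (z.2 : ℝ)))

private noncomputable def auxG (x y : ℤ × ℤ) (k : ℝ × ℝ) : ℝ :=
  (1 - Real.cos (k.1 * (x.1 : ℝ) + k.2 * (x.2 : ℝ))) / auxD k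
  + (1 - Real.cos (k.1 * (y.1 : ℝ) + k.2 * (y.2 : ℝ))) / auxD k
  - (1 - Real.cos (k.1 * ((x - y).1 : ℝ) + k.2 * ((x - y).2 : ℝ))) / auxD k
  - 1 / 8 * ((1 - Real.cos (k.1 * (x.1 : ℝ) + k.2 * (x.2 : ℝ)))
      + (1 - Real.cos (k.1 * (y.1 : ℝ) + k.2 * (y.2 : ℝ)))
      - (1 - Real.cos (k.1 * ((x - y).1 : ℝ) + k.2 * ((x - y).2 : ℝ))))

private lemma auxJ_eq (z : ℤ × ℤ) :
    auxJ z = (2 * Real.pi) ^ 2 * (1 - if z = 0 then 1 else 0) := aux_box_int z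

private lemma auxG_integrable (x y : ℤ × ℤ) :
    IntegrableOn (auxG x y)
      (Set.Ioo (-Real.pi) Real.pi ×ˢ Set.Ioo (-Real.pi) Real.pi) volume :=
  ((((aux_integrable_div x).add (aux_integrable_div y)).sub
      (aux_integrable_div (x - y))).sub
    ((((aux_integrable_cos x).add (aux_integrable_cos y)).sub
        (aux_integrable_cos (x - y))).const_mul (1 / 8)))

private lemma auxG_integral (x y : ℤ × ℤ) :
    ∫ k in (Set.Ioo (-Real.pi) Real.pi ×ˢ Set.Ioo (-Real.pi) Real.pi), auxG x y k =
    auxI x + auxI y - auxI (x - y) - 1 / 8 * (auxJ x + auxJ y - auxJ (x - y)) := by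
  unfold auxG auxI auxJ
  have d1 : IntegrableOn (fun k : ℝ × ℝ =>
      (1 - Real.cos (k.1 * (x.1 : ℝ) + k.2 * (x.2 : ℝ))) / auxD k)
      (Set.Ioo (-Real.pi) Real.pi ×ˢ Set.Ioo (-Real.pi) Real.pi) volume := aux_integrable_div x
  have d2 : IntegrableOn (fun k : ℝ × ℝ =>
      (1 - Real.cos (k.1 * (y.1 : ℝ) + k.2 * (y.2 : ℝ))) / auxD k)
      (Set.Ioo (-Real.pi) Real.pi ×ˢ Set.Ioo (-Real.pi) Real.pi) volume := aux_integrable_div y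
  have d3 : IntegrableOn (fun k : ℝ × ℝ =>
      (1 - Real.cos (k.1 * ((x - y).1 : ℝ) + k.2 * ((x - y).2 : ℝ))) / auxD k)
      (Set.Ioo (-Real.pi) Real.pi ×ˢ Set.Ioo (-Real.pi) Real.pi) volume :=
    aux_integrable_div (x - y)
  have c1 := aux_integrable_cos x
  have c2 := aux_integrable_cos y
  have c3 := aux_integrable_cos (x - y)
  have hd1 : IntegrableOn (fun k : ℝ × ℝ =>
      (1 - Real.cos (k.1 * (x.1 : ℝ) + k.2 * (x.2 : ℝ))) / auxD k
      + (1 - Real.cos (k.1 * (y.1 : ℝ) + k.2 * (y.2 : ℝ))) / auxD k)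
      (Set.Ioo (-Real.pi) Real.pi ×ˢ Set.Ioo (-Real.pi) Real.pi) volume := d1.add d2
  have hd2 : IntegrableOn (fun k : ℝ × ℝ =>
      (1 - Real.cos (k.1 * (x.1 : ℝ) + k.2 * (x.2 : ℝ))) / auxD k
      + (1 - Real.cos (k.1 * (y.1 : ℝ) + k.2 * (y.2 : ℝ))) / auxD k
      - (1 - Real.cos (k.1 * ((x - y).1 : ℝ) + k.2 * ((x - y).2 : ℝ))) / auxD k)
      (Set.Ioo (-Real.pi) Real.pi ×ˢ Set.Ioo (-Real.pi) Real.pi) volume := hd1.sub d3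
  have hc1 : IntegrableOn (fun k : ℝ × ℝ =>
      (1 - Real.cos (k.1 * (x.1 : ℝ) + k.2 * (x.2 : ℝ)))
      + (1 - Real.cos (k.1 * (y.1 : ℝ) + k.2 * (y.2 : ℝ))))
      (Set.Ioo (-Real.pi) Real.pi ×ˢ Set.Ioo (-Real.pi) Real.pi) volume := c1.add c2
  have hc2 : IntegrableOn (fun k : ℝ × ℝ =>
      (1 - Real.cos (k.1 * (x.1 : ℝ) + k.2 * (x.2 : ℝ)))
      + (1 - Real.cos (k.1 * (y.1 : ℝ) + k.2 * (y.2 : ℝ)))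
      - (1 - Real.cos (k.1 * ((x - y).1 : ℝ) + k.2 * ((x - y).2 : ℝ))))
      (Set.Ioo (-Real.pi) Real.pi ×ˢ Set.Ioo (-Real.pi) Real.pi) volume := hc1.sub c3
  rw [MeasureTheory.integral_sub hd2 (hc2.const_mul (1/8)),
    MeasureTheory.integral_sub hd1 d3, MeasureTheory.integral_add d1 d2,
    MeasureTheory.integral_const_mul, MeasureTheory.integral_sub hc1 c3,
    MeasureTheory.integral_add c1 c2]

private lemma aux_Ct_eq (x y : ℤ × ℤ) :
    (2 * Real.pi) ^ (-2 : ℤ) * auxI x + (2 * Real.pi) ^ (-2 : ℤ) * auxI y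
      - (2 * Real.pi) ^ (-2 : ℤ) * auxI (x - y)
      - 1 / 8 * (1 - (if x = 0 then (1 : ℝ) else 0) - (if y = 0 then (1 : ℝ) else 0)
          + (if x = y then (1 : ℝ) else 0))
    = (2 * Real.pi) ^ (-2 : ℤ) *
        ∫ k in (Set.Ioo (-Real.pi) Real.pi ×ˢ Set.Ioo (-Real.pi) Real.pi), auxG x y k := by
  rw [auxG_integral, auxJ_eq x, auxJ_eq y, auxJ_eq (x - y)]
  have hxy : (if x - y = 0 then (1:ℝ) else 0) = (if x = y then 1 else 0) := by
    simp [sub_eq_zero]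
  rw [hxy]
  have hc : (2 * Real.pi) ^ (-2 : ℤ) * (2 * Real.pi) ^ 2 = 1 := by
    have h0 : (2 * Real.pi) * (2 * Real.pi) ≠ 0 := by positivity
    rw [zpow_neg, zpow_two, pow_two]
    exact inv_mul_cancel₀ h0
  linear_combination (1 / 8 * (1 - (if x = 0 then (1:ℝ) else 0) - (if y = 0 then (1:ℝ) else 0)
    + (if x = y then (1:ℝ) else 0))) * hc

private lemma auxD_nonneg (k : ℝ × ℝ) : 0 ≤ auxD k := by unfold auxD; positivity

private lemma auxD_le (k : ℝ × ℝ) : auxD k ≤ 8 := by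
  unfold auxD
  nlinarith [Real.sin_sq_le_one (k.1 / 2), Real.sin_sq_le_one (k.2 / 2)]

private lemma aux_arg_sub (x y : ℤ × ℤ) (k : ℝ × ℝ) :
    k.1 * (((x - y).1 : ℤ) : ℝ) + k.2 * (((x - y).2 : ℤ) : ℝ) =
    (k.1 * (x.1 : ℝ) + k.2 * (x.2 : ℝ)) - (k.1 * (y.1 : ℝ) + k.2 * (y.2 : ℝ)) := by
  simp only [Prod.fst_sub, Prod.snd_sub]
  push_cast
  ring

private lemma auxG_eq_pt (x y : ℤ × ℤ) (k : ℝ × ℝ) :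
    auxG x y k = (1 / auxD k - 1 / 8) *
      ((1 - Real.cos (k.1 * (x.1 : ℝ) + k.2 * (x.2 : ℝ)))
          * (1 - Real.cos (k.1 * (y.1 : ℝ) + k.2 * (y.2 : ℝ)))
        + Real.sin (k.1 * (x.1 : ℝ) + k.2 * (x.2 : ℝ))
          * Real.sin (k.1 * (y.1 : ℝ) + k.2 * (y.2 : ℝ))) := by
  unfold auxG
  rw [aux_arg_sub x y k, Real.cos_sub]
  ring

private lemma aux_sum_eq (v : (ℤ × ℤ) →₀ ℝ) (k : ℝ × ℝ) :
    ∑ x ∈ v.support, ∑ y ∈ v.support, v x * v y * auxG x y k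
    = (1 / auxD k - 1 / 8) *
      ((∑ x ∈ v.support, v x * (1 - Real.cos (k.1 * (x.1 : ℝ) + k.2 * (x.2 : ℝ)))) ^ 2
        + (∑ x ∈ v.support, v x * Real.sin (k.1 * (x.1 : ℝ) + k.2 * (x.2 : ℝ))) ^ 2) := by
  have e1 : (∑ x ∈ v.support, v x * (1 - Real.cos (k.1 * (x.1 : ℝ) + k.2 * (x.2 : ℝ)))) ^ 2
      = ∑ x ∈ v.support, ∑ y ∈ v.support,
          (v x * (1 - Real.cos (k.1 * (x.1 : ℝ) + k.2 * (x.2 : ℝ))))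
          * (v y * (1 - Real.cos (k.1 * (y.1 : ℝ) + k.2 * (y.2 : ℝ)))) := by
    rw [sq, Finset.sum_mul_sum]
  have e2 : (∑ x ∈ v.support, v x * Real.sin (k.1 * (x.1 : ℝ) + k.2 * (x.2 : ℝ))) ^ 2
      = ∑ x ∈ v.support, ∑ y ∈ v.support,
          (v x * Real.sin (k.1 * (x.1 : ℝ) + k.2 * (x.2 : ℝ)))
          * (v y * Real.sin (k.1 * (y.1 : ℝ) + k.2 * (y.2 : ℝ))) := by
    rw [sq, Finset.sum_mul_sum]
  rw [e1, e2, ← Finset.sum_add_distrib, Finset.mul_sum]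
  refine Finset.sum_congr rfl fun x _ => ?_
  rw [← Finset.sum_add_distrib, Finset.mul_sum]
  refine Finset.sum_congr rfl fun y _ => ?_
  rw [auxG_eq_pt]
  ring

private lemma aux_ptwise (v : (ℤ × ℤ) →₀ ℝ) {k : ℝ × ℝ}
    (hk : k ∈ Set.Ioo (-Real.pi) Real.pi ×ˢ Set.Ioo (-Real.pi) Real.pi) :
    0 ≤ ∑ x ∈ v.support, ∑ y ∈ v.support, v x * v y * auxG x y k := by
  rw [aux_sum_eq]
  obtain ⟨hk1, hk2⟩ := Set.mem_prod.mp hk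
  rcases eq_or_lt_of_le (auxD_nonneg k) with h | h
  · -- degenerate case : auxD k = 0 forces k = 0
    have hD0 : 4 * Real.sin (k.1 / 2) ^ 2 + 4 * Real.sin (k.2 / 2) ^ 2 = 0 := by
      have := h.symm; unfold auxD at this; exact this
    have hs1 : Real.sin (k.1 / 2) = 0 := by
      have h1 : Real.sin (k.1 / 2) ^ 2 = 0 := by
        nlinarith [sq_nonneg (Real.sin (k.1 / 2)), sq_nonneg (Real.sin (k.2 / 2))]
      exact pow_eq_zero_iff two_ne_zero |>.mp h1
    have hs2 : Real.sin (k.2 / 2) = 0 := by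
      have h1 : Real.sin (k.2 / 2) ^ 2 = 0 := by
        nlinarith [sq_nonneg (Real.sin (k.1 / 2)), sq_nonneg (Real.sin (k.2 / 2))]
      exact pow_eq_zero_iff two_ne_zero |>.mp h1
    have hk1' : k.1 = 0 := by
      have hb1 : -Real.pi < k.1 / 2 := by
        have := hk1.1; have := Real.pi_pos; cases hk1; linarith
      have hb2 : k.1 / 2 < Real.pi := by
        have := hk1.2; have := Real.pi_pos; linarith
      have := (Real.sin_eq_zero_iff_of_lt_of_lt hb1 hb2).mp hs1
      linarith
    have hk2' : k.2 = 0 := by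
      have hb1 : -Real.pi < k.2 / 2 := by
        have := hk2.1; have := Real.pi_pos; linarith
      have hb2 : k.2 / 2 < Real.pi := by
        have := hk2.2; have := Real.pi_pos; linarith
      have := (Real.sin_eq_zero_iff_of_lt_of_lt hb1 hb2).mp hs2
      linarith
    have hA : (∑ x ∈ v.support, v x * (1 - Real.cos (k.1 * (x.1 : ℝ) + k.2 * (x.2 : ℝ)))) = 0 :=
      Finset.sum_eq_zero fun x _ => by rw [hk1', hk2']; simp
    have hB : (∑ x ∈ v.support, v x * Real.sin (k.1 * (x.1 : ℝ) + k.2 * (x.2 : ℝ))) = 0 :=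
      Finset.sum_eq_zero fun x _ => by rw [hk1', hk2']; simp
    rw [hA, hB]
    norm_num
  · have h8 : 1 / 8 ≤ 1 / auxD k := one_div_le_one_div_of_le h (auxD_le k)
    exact mul_nonneg (by linarith) (by positivity)

private lemma auxI_symm (x y : ℤ × ℤ) : auxI (x - y) = auxI (y - x) := by
  unfold auxI
  have hfun : (fun k : ℝ × ℝ =>
      (1 - Real.cos (k.1 * ((x - y).1 : ℝ) + k.2 * ((x - y).2 : ℝ))) / auxD k) =
      fun k : ℝ × ℝ =>
      (1 - Real.cos (k.1 * ((y - x).1 : ℝ) + k.2 * ((y - x).2 : ℝ))) / auxD k := by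
    funext k
    have harg : k.1 * (((x - y).1 : ℤ) : ℝ) + k.2 * (((x - y).2 : ℤ) : ℝ) =
        -(k.1 * (((y - x).1 : ℤ) : ℝ) + k.2 * (((y - x).2 : ℤ) : ℝ)) := by
      simp only [Prod.fst_sub, Prod.snd_sub]
      push_cast
      ring
    rw [harg, Real.cos_neg]
  rw [hfun]

/-- Lemma 8.4, positive semidefiniteness: the kernel
`C̃(x,y) = 𝔞(x) + 𝔞(y) − 𝔞(x−y) − ⅛(1 − δ_{x,0} − δ_{y,0} + δ_{x,y})` on `ℤ²`
is symmetric and positive semidefinite. -/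
theorem statement9
    (Dhat : ℝ × ℝ → ℝ)
    (hDhat : ∀ k : ℝ × ℝ, Dhat k = 4 * Real.sin (k.1 / 2) ^ 2 + 4 * Real.sin (k.2 / 2) ^ 2)
    (a : ℤ × ℤ → ℝ)
    (ha : ∀ x : ℤ × ℤ, a x = (2 * Real.pi) ^ (-2 : ℤ) *
      ∫ k in (Set.Ioo (-Real.pi) Real.pi ×ˢ Set.Ioo (-Real.pi) Real.pi),
        (1 - Real.cos (k.1 * (x.1 : ℝ) + k.2 * (x.2 : ℝ))) / Dhat k)
    (Ct : ℤ × ℤ → ℤ × ℤ → ℝ)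
    (hCt : ∀ x y : ℤ × ℤ, Ct x y = a x + a y - a (x - y)
      - (1 / 8) * (1 - (if x = 0 then (1 : ℝ) else 0) - (if y = 0 then (1 : ℝ) else 0)
          + (if x = y then (1 : ℝ) else 0))) :
    (∀ x y : ℤ × ℤ, Ct x y = Ct y x) ∧
    ∀ v : (ℤ × ℤ) →₀ ℝ,
      0 ≤ ∑ x ∈ v.support, ∑ y ∈ v.support, v x * Ct x y * v y := by
  obtain rfl : Dhat = auxD := funext hDhat
  have ha' : ∀ x : ℤ × ℤ, a x = (2 * Real.pi) ^ (-2 : ℤ) * auxI x := fun x => ha x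
  constructor
  · intro x y
    rw [hCt x y, hCt y x]
    have h1 : a (x - y) = a (y - x) := by rw [ha' (x - y), ha' (y - x), auxI_symm x y]
    have h2 : (if x = y then (1:ℝ) else 0) = if y = x then 1 else 0 := by
      by_cases h : x = y
      · simp [h]
      · rw [if_neg h, if_neg (fun hyx => h hyx.symm)]
    rw [h1, h2]
    ring
  · intro v
    have hsummand : ∀ x y : ℤ × ℤ, v x * Ct x y * v y =
        (2 * Real.pi) ^ (-2 : ℤ) *
          ∫ k in (Set.Ioo (-Real.pi) Real.pi ×ˢ Set.Ioo (-Real.pi) Real.pi),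
            v x * v y * auxG x y k := by
      intro x y
      rw [hCt x y, ha' x, ha' y, ha' (x - y), aux_Ct_eq x y, MeasureTheory.integral_const_mul]
      ring
    have step1 : ∑ x ∈ v.support, ∑ y ∈ v.support, v x * Ct x y * v y =
        (2 * Real.pi) ^ (-2 : ℤ) * ∑ x ∈ v.support, ∑ y ∈ v.support,
          ∫ k in (Set.Ioo (-Real.pi) Real.pi ×ˢ Set.Ioo (-Real.pi) Real.pi),
            v x * v y * auxG x y k := by
      rw [Finset.mul_sum]
      refine Finset.sum_congr rfl fun x _ => ?_
      rw [Finset.mul_sum]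
      exact Finset.sum_congr rfl fun y _ => hsummand x y
    have step2 : ∑ x ∈ v.support, ∑ y ∈ v.support,
        (∫ k in (Set.Ioo (-Real.pi) Real.pi ×ˢ Set.Ioo (-Real.pi) Real.pi),
          v x * v y * auxG x y k) =
        ∫ k in (Set.Ioo (-Real.pi) Real.pi ×ˢ Set.Ioo (-Real.pi) Real.pi),
          ∑ x ∈ v.support, ∑ y ∈ v.support, v x * v y * auxG x y k := by
      calc ∑ x ∈ v.support, ∑ y ∈ v.support,
            (∫ k in (Set.Ioo (-Real.pi) Real.pi ×ˢ Set.Ioo (-Real.pi) Real.pi),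
              v x * v y * auxG x y k)
          = ∑ x ∈ v.support,
            ∫ k in (Set.Ioo (-Real.pi) Real.pi ×ˢ Set.Ioo (-Real.pi) Real.pi),
              ∑ y ∈ v.support, v x * v y * auxG x y k :=
            Finset.sum_congr rfl fun x _ =>
              (MeasureTheory.integral_finset_sum _ fun y _ =>
                ((auxG_integrable x y).const_mul (v x * v y))).symm
        _ = ∫ k in (Set.Ioo (-Real.pi) Real.pi ×ˢ Set.Ioo (-Real.pi) Real.pi),
              ∑ x ∈ v.support, ∑ y ∈ v.support, v x * v y * auxG x y k :=
            (MeasureTheory.integral_finset_sum _ fun x _ =>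
              MeasureTheory.integrable_finset_sum _ fun y _ =>
                ((auxG_integrable x y).const_mul (v x * v y))).symm
    rw [step1, step2]
    refine mul_nonneg (by positivity) ?_
    exact MeasureTheory.setIntegral_nonneg (measurableSet_Ioo.prod measurableSet_Ioo)
      fun k hk => aux_ptwise v hk
end

section
/- Let D ⊂ ℝ² be a nonempty bounded open set and let (D_N)_{N≥1} be subsets of ℤ² such that: (i) there exists N₀ such that for all N ≥ N₀, every x ∈ D_N satisfies d_∞(x/N, ℝ²∖D) > 1/N; and (ii) for every δ > 0 there exists N₁ such that for all N ≥ N₁, D_N contains every x ∈ ℤ² with d_∞(x/N, ℝ²∖D) > δ. For N with D_N finite, let deg_ρ(N) denote the number of ordered pairs (x,y) with x ∈ D_N, y ∈ ℤ²∖D_N and ‖x−y‖₁ = 1 (the number of edges of ℤ² from D_N to its complement), and let |D_N| denote the cardinality of D_N. Then deg_ρ(N) / (4·|D_N| + deg_ρ(N)) → 0 as N → ∞. -/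
/-!
The lattice point `x` is the corner of the cell `[x/N, (x+1)/N)²` of area `N⁻²`, and distinct
points have disjoint cells. By (i) the cells of `D_N` lie in `D`. A vertex of `D_N` with a
neighbour `y ∉ D_N` has, by (ii), `y/N` within `t/2` of `Dᶜ`, so for large `N` its cell lies in
the layer `D ∩ thickening t Dᶜ`; comparing areas, there are at most `N² vol(layer)` such
vertices, each with at most four outgoing edges. Conversely, by (ii) the cells of `D_N` cover
the points of `D` at distance `≥ δ₀` from `Dᶜ`, a set of positive area `c`, so `|D_N| ≥ c N²`.
Hence `deg(ρ)/deg(D_N) ≤ vol(layer)/c`, which tends to `0` with `t` because the layers shrink to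
the empty set.
-/

open Filter Set MeasureTheory Metric Topology
open scoped ENNReal

noncomputable def rescale (N : ℝ) (x : ℤ × ℤ) : ℝ × ℝ := (x.1 / N, x.2 / N)

noncomputable def latticeCube (N : ℝ) (x : ℤ × ℤ) : Set (ℝ × ℝ) :=
  Ico (x.1 / N) ((x.1 + 1) / N) ×ˢ Ico (x.2 / N) ((x.2 + 1) / N)

def edgeBoundary (S : Set (ℤ × ℤ)) : Set ((ℤ × ℤ) × (ℤ × ℤ)) :=
  {p | p.1 ∈ S ∧ p.2 ∉ S ∧ |p.1.1 - p.2.1| + |p.1.2 - p.2.2| = 1}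

section LatticeCube

variable {N : ℝ} {x : ℤ × ℤ} {z : ℝ × ℝ}

lemma mem_Ico_div_iff_floor_eq (hN : 0 < N) {a : ℤ} {t : ℝ} :
    t ∈ Ico (a / N) ((a + 1) / N) ↔ ⌊N * t⌋ = a := by
  rw [Int.floor_eq_iff, mem_Ico, div_le_iff₀ hN, lt_div_iff₀ hN, mul_comm t]

lemma mem_latticeCube_iff (hN : 0 < N) : z ∈ latticeCube N x ↔ (⌊N * z.1⌋, ⌊N * z.2⌋) = x := by
  rw [latticeCube, mem_prod, mem_Ico_div_iff_floor_eq hN, mem_Ico_div_iff_floor_eq hN,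
    Prod.ext_iff]

lemma mem_latticeCube_floor (hN : 0 < N) (z : ℝ × ℝ) :
    z ∈ latticeCube N (⌊N * z.1⌋, ⌊N * z.2⌋) :=
  (mem_latticeCube_iff hN).2 rfl

lemma pairwiseDisjoint_latticeCube (hN : 0 < N) (s : Set (ℤ × ℤ)) :
    s.PairwiseDisjoint (latticeCube N) := fun _ _ _ _ hxy =>
  disjoint_left.2 fun _ hx hy =>
    hxy (((mem_latticeCube_iff hN).1 hx).symm.trans ((mem_latticeCube_iff hN).1 hy))

lemma measurableSet_latticeCube : MeasurableSet (latticeCube N x) :=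
  measurableSet_Ico.prod measurableSet_Ico

lemma volume_latticeCube (hN : 0 < N) (x : ℤ × ℤ) :
    volume (latticeCube N x) = ENNReal.ofReal (1 / N ^ 2) := by
  have side : ∀ a : ℝ, (a + 1) / N - a / N = 1 / N := fun a => by ring
  rw [latticeCube, Measure.volume_eq_prod, Measure.prod_prod, Real.volume_Ico, Real.volume_Ico,
    side, side, ← ENNReal.ofReal_mul (by positivity)]
  congr 1
  ring

lemma dist_rescale_lt_of_mem_latticeCube (hN : 0 < N) (hz : z ∈ latticeCube N x) :
    dist z (rescale N x) < 1 / N := by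
  obtain ⟨⟨h₁, h₁'⟩, h₂, h₂'⟩ := hz
  rw [add_div] at h₁' h₂'
  rw [Prod.dist_eq, max_lt_iff, Real.dist_eq, Real.dist_eq, abs_sub_lt_iff, abs_sub_lt_iff]
  simp only [rescale]
  have := one_div_pos.2 hN
  exact ⟨⟨by linarith, by linarith⟩, by linarith, by linarith⟩

lemma dist_rescale_le_of_adj (hN : 0 < N) {y : ℤ × ℤ} (hxy : |x.1 - y.1| + |x.2 - y.2| = 1) :
    dist (rescale N x) (rescale N y) ≤ 1 / N := by
  have key : ∀ a b : ℤ, |a - b| ≤ 1 → dist ((a : ℝ) / N) (b / N) ≤ 1 / N := fun a b hab => by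
    rw [Real.dist_eq, ← sub_div, abs_div, abs_of_pos hN]
    gcongr
    rw [← Int.cast_sub, ← Int.cast_abs]
    exact_mod_cast hab
  exact max_le (key _ _ (by linarith [abs_nonneg (x.2 - y.2)]))
    (key _ _ (by linarith [abs_nonneg (x.1 - y.1)]))

end LatticeCube

section Counting

variable {N : ℝ} {A : Set (ℤ × ℤ)} {T : Set (ℝ × ℝ)}

lemma card_mul_volume_latticeCube_le (hN : 0 < N) (s : Finset (ℤ × ℤ))
    (h : ∀ x ∈ s, latticeCube N x ⊆ T) : s.card * ENNReal.ofReal (1 / N ^ 2) ≤ volume T :=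
  calc s.card * ENNReal.ofReal (1 / N ^ 2) = ∑ x ∈ s, volume (latticeCube N x) := by
        simp [volume_latticeCube hN]
    _ = volume (⋃ x ∈ s, latticeCube N x) :=
        (measure_biUnion_finset (pairwiseDisjoint_latticeCube hN _)
          fun _ _ => measurableSet_latticeCube).symm
    _ ≤ volume T := measure_mono (iUnion₂_subset h)

lemma volume_le_card_mul_volume_latticeCube (hN : 0 < N) (s : Finset (ℤ × ℤ))
    (h : T ⊆ ⋃ x ∈ s, latticeCube N x) : volume T ≤ s.card * ENNReal.ofReal (1 / N ^ 2) :=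
  calc volume T ≤ volume (⋃ x ∈ s, latticeCube N x) := measure_mono h
    _ ≤ ∑ x ∈ s, volume (latticeCube N x) := measure_biUnion_finset_le s _
    _ = s.card * ENNReal.ofReal (1 / N ^ 2) := by simp [volume_latticeCube hN]

lemma finite_of_latticeCube_subset (hN : 0 < N) (hT : volume T ≠ ∞)
    (h : ∀ x ∈ A, latticeCube N x ⊆ T) : A.Finite := by
  by_contra hA
  obtain ⟨n, hn⟩ := ENNReal.exists_nat_mul_gt (a := ENNReal.ofReal (1 / N ^ 2))
    (ENNReal.ofReal_pos.2 (by positivity)).ne' hT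
  obtain ⟨s, hsA, rfl⟩ := Set.Infinite.exists_subset_card_eq hA n
  exact (card_mul_volume_latticeCube_le hN s fun x hx => h x (hsA hx)).not_gt hn

lemma ncard_le_of_latticeCube_subset (hN : 0 < N) (hT : volume T ≠ ∞)
    (h : ∀ x ∈ A, latticeCube N x ⊆ T) : (A.ncard : ℝ) ≤ N ^ 2 * volume.real T := by
  obtain ⟨s, rfl⟩ := (finite_of_latticeCube_subset hN hT h).exists_finset_coe
  have hs := card_mul_volume_latticeCube_le hN s h
  rw [← ENNReal.ofReal_natCast, ← ENNReal.ofReal_mul (by positivity),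
    ENNReal.ofReal_le_iff_le_toReal hT, ← mul_div_assoc, mul_one, div_le_iff₀' (by positivity)]
    at hs
  rwa [ncard_coe_finset, measureReal_def]

lemma le_ncard_of_subset_biUnion_latticeCube (hN : 0 < N) (hA : A.Finite)
    (h : T ⊆ ⋃ x ∈ A, latticeCube N x) : N ^ 2 * volume.real T ≤ A.ncard := by
  obtain ⟨s, rfl⟩ := hA.exists_finset_coe
  have hs := volume_le_card_mul_volume_latticeCube hN s (by simpa using h)
  rw [← ENNReal.ofReal_natCast, ← ENNReal.ofReal_mul (by positivity), ← mul_div_assoc, mul_one]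
    at hs
  rw [ncard_coe_finset, measureReal_def, ← le_div_iff₀' (by positivity)]
  exact ENNReal.toReal_le_of_le_ofReal (by positivity) hs

end Counting

lemma ncard_le_four_mul_ncard_image_fst {E : Set ((ℤ × ℤ) × (ℤ × ℤ))}
    (hE : ∀ p ∈ E, |p.1.1 - p.2.1| + |p.1.2 - p.2.2| = 1) (hfin : (Prod.fst '' E).Finite) :
    E.ncard ≤ 4 * (Prod.fst '' E).ncard := by
  let U : Finset (ℤ × ℤ) := {(1, 0), (-1, 0), (0, 1), (0, -1)}
  have hsub : E ⊆ (fun q => (q.1, q.1 + q.2)) '' ((Prod.fst '' E) ×ˢ U) := by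
    rintro ⟨⟨a, b⟩, c, d⟩ hp
    have h : |a - c| + |b - d| = 1 := hE _ hp
    refine ⟨((a, b), (c - a, d - b)), ⟨⟨_, hp, rfl⟩, ?_⟩, by simp⟩
    simp only [U, Finset.coe_insert, Finset.coe_singleton, mem_insert_iff, mem_singleton_iff,
      Prod.mk.injEq]
    rcases abs_cases (a - c) with ⟨h₁, _⟩ | ⟨h₁, _⟩ <;>
      rcases abs_cases (b - d) with ⟨h₂, _⟩ | ⟨h₂, _⟩ <;> omega
  calc E.ncard ≤ ((fun q => (q.1, q.1 + q.2)) '' ((Prod.fst '' E) ×ˢ U)).ncard :=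
        ncard_le_ncard hsub ((hfin.prod U.finite_toSet).image _)
    _ ≤ ((Prod.fst '' E) ×ˢ (U : Set (ℤ × ℤ))).ncard := ncard_image_le (hfin.prod U.finite_toSet)
    _ = 4 * (Prod.fst '' E).ncard := by rw [ncard_prod, ncard_coe_finset, mul_comm]; rfl

section Approximation

variable {N δ ε : ℝ} {D : Set (ℝ × ℝ)} {S : Set (ℤ × ℤ)} {x : ℤ × ℤ}

lemma latticeCube_subset_of_lt_infDist (hN : 0 < N) (hx : 1 / N < infDist (rescale N x) Dᶜ) :
    latticeCube N x ⊆ D := fun _ hz =>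
  not_not.1 <| notMem_of_dist_lt_infDist <|
    (dist_comm _ _).trans_lt ((dist_rescale_lt_of_mem_latticeCube hN hz).trans hx)

lemma latticeCube_subset_thickening (hN : 0 < N) (hD : Dᶜ.Nonempty) {y : ℤ × ℤ}
    (hxy : |x.1 - y.1| + |x.2 - y.2| = 1) (hy : infDist (rescale N y) Dᶜ ≤ δ)
    (hδε : δ + 2 / N < ε) : latticeCube N x ⊆ thickening ε Dᶜ := by
  intro z hz
  rw [mem_thickening_iff_infDist_lt hD]
  have hzx := dist_rescale_lt_of_mem_latticeCube hN hz
  have hdxy := dist_rescale_le_of_adj hN hxy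
  have two_div : 2 / N = 1 / N + 1 / N := by ring
  calc infDist z Dᶜ ≤ infDist (rescale N y) Dᶜ + dist z (rescale N y) :=
        infDist_le_infDist_add_dist
    _ ≤ δ + (dist z (rescale N x) + dist (rescale N x) (rescale N y)) :=
        add_le_add hy (dist_triangle _ _ _)
    _ < ε := by linarith

lemma compl_thickening_subset_biUnion_latticeCube (hN : 0 < N) (hD : Dᶜ.Nonempty)
    (hS : ∀ x, δ < infDist (rescale N x) Dᶜ → x ∈ S) (hδε : δ + 1 / N ≤ ε) :
    (thickening ε Dᶜ)ᶜ ⊆ ⋃ x ∈ S, latticeCube N x := by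
  intro z hz
  rw [mem_compl_iff, mem_thickening_iff_infDist_lt hD, not_lt] at hz
  have hzx := mem_latticeCube_floor hN z
  refine mem_biUnion (hS _ ?_) hzx
  linarith [dist_rescale_lt_of_mem_latticeCube hN hzx,
    infDist_le_infDist_add_dist (x := z) (y := rescale N (⌊N * z.1⌋, ⌊N * z.2⌋)) (s := Dᶜ)]

lemma finite_of_forall_lt_infDist (hN : 0 < N) (hD : volume D ≠ ∞)
    (hS : ∀ x ∈ S, 1 / N < infDist (rescale N x) Dᶜ) : S.Finite :=
  finite_of_latticeCube_subset hN hD fun x hx => latticeCube_subset_of_lt_infDist hN (hS x hx)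

lemma volume_compl_thickening_le_ncard (hN : 0 < N) (hD : Dᶜ.Nonempty) (hS_fin : S.Finite)
    (hS : ∀ x, δ < infDist (rescale N x) Dᶜ → x ∈ S) (hδε : δ + 1 / N ≤ ε) :
    N ^ 2 * volume.real (thickening ε Dᶜ)ᶜ ≤ S.ncard :=
  le_ncard_of_subset_biUnion_latticeCube hN hS_fin
    (compl_thickening_subset_biUnion_latticeCube hN hD hS hδε)

lemma ncard_edgeBoundary_le (hN : 0 < N) (hD : Dᶜ.Nonempty) (hDvol : volume D ≠ ∞)
    (hS_in : ∀ x ∈ S, 1 / N < infDist (rescale N x) Dᶜ)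
    (hS : ∀ x, δ < infDist (rescale N x) Dᶜ → x ∈ S) (hδε : δ + 2 / N < ε) :
    ((edgeBoundary S).ncard : ℝ) ≤ 4 * (N ^ 2 * volume.real (thickening ε Dᶜ ∩ D)) := by
  have hT : volume (thickening ε Dᶜ ∩ D) ≠ ∞ := measure_ne_top_of_subset inter_subset_right hDvol
  have hcube : ∀ x ∈ Prod.fst '' edgeBoundary S, latticeCube N x ⊆ thickening ε Dᶜ ∩ D := by
    rintro _ ⟨⟨x, y⟩, ⟨hx, hy, hxy⟩, rfl⟩
    refine subset_inter (latticeCube_subset_thickening hN hD hxy ?_ hδε)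
      (latticeCube_subset_of_lt_infDist hN (hS_in x hx))
    exact not_lt.1 (mt (hS y) hy)
  have hcount := ncard_le_four_mul_ncard_image_fst (fun p hp => hp.2.2)
    (finite_of_latticeCube_subset hN hT hcube)
  calc ((edgeBoundary S).ncard : ℝ) ≤ 4 * ((Prod.fst '' edgeBoundary S).ncard : ℝ) := by
        exact_mod_cast hcount
    _ ≤ 4 * (N ^ 2 * volume.real (thickening ε Dᶜ ∩ D)) := by
        gcongr
        exact ncard_le_of_latticeCube_subset hN hT hcube

end Approximation

section Measure

variable {α : Type*} [PseudoMetricSpace α] [MeasurableSpace α] {μ : Measure α} {D : Set α}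

lemma tendsto_measure_thickening_compl_inter [OpensMeasurableSpace α] (hD : IsOpen D)
    (hμ : μ D ≠ ∞) :
    Tendsto (fun t => μ (thickening t Dᶜ ∩ D)) (𝓝[>] 0) (𝓝 0) := by
  have hrestrict : ∀ t, μ.restrict D (thickening t Dᶜ) = μ (thickening t Dᶜ ∩ D) := fun t =>
    Measure.restrict_apply isOpen_thickening.measurableSet
  have h := tendsto_measure_thickening (μ := μ.restrict D) (s := Dᶜ)
    ⟨1, one_pos, (hrestrict 1).trans_ne (measure_ne_top_of_subset inter_subset_right hμ)⟩
  rwa [hD.isClosed_compl.closure_eq, Measure.restrict_apply hD.isClosed_compl.measurableSet,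
    compl_inter_self, measure_empty, funext hrestrict] at h

lemma exists_pos_measureReal_compl_thickening_compl [μ.IsOpenPosMeasure] (hD : IsOpen D)
    (hne : D.Nonempty) (hμ : μ D ≠ ∞) : ∃ δ > 0, 0 < μ.real (thickening δ Dᶜ)ᶜ := by
  obtain ⟨z, hz⟩ := hne
  obtain ⟨r, hr, hball⟩ := Metric.isOpen_iff.1 hD z hz
  have hsub : ball z (r / 2) ⊆ (thickening (r / 2) Dᶜ)ᶜ := by
    intro w hw hwt
    obtain ⟨v, hv, hwv⟩ := mem_thickening_iff.1 hwt
    refine hv (hball ?_)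
    rw [mem_ball] at hw ⊢
    linarith [dist_triangle v w z, dist_comm v w]
  refine ⟨r / 2, half_pos hr, ENNReal.toReal_pos ?_ ?_⟩
  · exact ((measure_ball_pos μ z (half_pos hr)).trans_le (measure_mono hsub)).ne'
  · exact measure_ne_top_of_subset (compl_subset_comm.1 (self_subset_thickening (half_pos hr) _)) hμ

end Measure

lemma Bornology.IsBounded.nonempty_compl {α : Type*} [PseudoMetricSpace α] [ProperSpace α]
    [NoncompactSpace α] {s : Set α} (hs : IsBounded s) : sᶜ.Nonempty :=
  Set.nonempty_compl.2 fun h =>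
    not_compactSpace_iff.2 ‹_› (compactSpace_iff_isBounded_univ.2 (h ▸ hs))

lemma tendsto_zero_of_forall_eventually_le {ι : Type*} {l : Filter ι} {f : ι → ℝ} {g : ℝ → ℝ}
    (hf : ∀ i, 0 ≤ f i) (hg : Tendsto g (𝓝[>] 0) (𝓝 0)) (h : ∀ t > 0, ∀ᶠ i in l, f i ≤ g t) :
    Tendsto f l (𝓝 0) := by
  refine tendsto_order.2 ⟨fun a ha => Eventually.of_forall fun i => ha.trans_le (hf i),
    fun ε hε => ?_⟩
  obtain ⟨t, hgt, ht⟩ := ((hg.eventually (gt_mem_nhds hε)).and self_mem_nhdsWithin).exists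
  exact (h t ht).mono fun i hi => hi.trans_lt hgt

/-- first assertion of Lemma 5.8: for an admissible lattice
approximation `D_N` of a nonempty bounded open `D ⊆ ℝ²`, the ratio of the boundary-vertex
degree `deg(ρ)` (the number of edges of `ℤ²` from `D_N` to its complement) to the total
degree `4|D_N| + deg(ρ)` tends to `0`. -/
theorem statement10
    (D : Set (ℝ × ℝ)) (hDne : D.Nonempty) (hDopen : IsOpen D)
    (hDbdd : Bornology.IsBounded D)
    (DN : ℕ → Set (ℤ × ℤ))
    (h1 : ∃ N₀ : ℕ, ∀ N ≥ N₀, ∀ x ∈ DN N,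
      (1 : ℝ) / N < Metric.infDist (((x.1 : ℝ) / N, (x.2 : ℝ) / N)) Dᶜ)
    (h2 : ∀ δ : ℝ, 0 < δ → ∃ N₁ : ℕ, ∀ N ≥ N₁, ∀ x : ℤ × ℤ,
      δ < Metric.infDist (((x.1 : ℝ) / N, (x.2 : ℝ) / N)) Dᶜ → x ∈ DN N)
    (degρ : ℕ → ℕ)
    (hdegρ : ∀ N, degρ N = {p : (ℤ × ℤ) × (ℤ × ℤ) |
      p.1 ∈ DN N ∧ p.2 ∉ DN N ∧ |p.1.1 - p.2.1| + |p.1.2 - p.2.2| = 1}.ncard) :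
    Tendsto (fun N => (degρ N : ℝ) / (4 * (DN N).ncard + degρ N)) atTop (nhds 0) := by
  obtain ⟨N₀, hN₀⟩ := h1
  have hDvol : volume D ≠ ∞ := hDbdd.measure_lt_top.ne
  have hDc : Dᶜ.Nonempty := hDbdd.nonempty_compl
  obtain ⟨δ₀, hδ₀, hc⟩ := exists_pos_measureReal_compl_thickening_compl hDopen hDne hDvol
  set c := volume.real (thickening δ₀ Dᶜ)ᶜ
  obtain ⟨N₁, hN₁⟩ := h2 (δ₀ / 2) (half_pos hδ₀)
  refine tendsto_zero_of_forall_eventually_le (g := fun t => volume.real (thickening t Dᶜ ∩ D) / c)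
    (fun N => by positivity) ?_ fun t ht => ?_
  · simpa [measureReal_def] using ((ENNReal.tendsto_toReal ENNReal.zero_ne_top).comp
      (tendsto_measure_thickening_compl_inter hDopen hDvol)).div_const c
  obtain ⟨N₂, hN₂⟩ := h2 (t / 2) (half_pos ht)
  filter_upwards [eventually_ge_atTop N₀, eventually_ge_atTop N₁, eventually_ge_atTop N₂,
    eventually_gt_atTop 0,
    tendsto_one_div_atTop_nhds_zero_nat.eventually (gt_mem_nhds (by positivity : 0 < t / 4)),
    tendsto_one_div_atTop_nhds_zero_nat.eventually (gt_mem_nhds (half_pos hδ₀))]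
    with N hN₀N hN₁N hN₂N hN_pos hNt hNδ₀
  have hN : (0 : ℝ) < N := Nat.cast_pos.2 hN_pos
  have hlow := volume_compl_thickening_le_ncard hN hDc
    (finite_of_forall_lt_infDist hN hDvol (hN₀ N hN₀N)) (hN₁ N hN₁N) (ε := δ₀) (by linarith)
  have hup := ncard_edgeBoundary_le hN hDc hDvol (hN₀ N hN₀N) (hN₂ N hN₂N) (ε := t)
    (by linarith [show (2 : ℝ) / N = 2 * (1 / N) by ring])
  have hdeg : (0 : ℝ) ≤ (edgeBoundary (DN N)).ncard := Nat.cast_nonneg _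
  rw [hdegρ]
  calc _ ≤ 4 * (N ^ 2 * volume.real (thickening t Dᶜ ∩ D)) / (4 * (N ^ 2 * c)) :=
        div_le_div₀ (by positivity) hup (by positivity) (by linarith [hlow, hdeg])
    _ = volume.real (thickening t Dᶜ ∩ D) / c := by field_simp
end

section
/- Define I₁(z) := Σ_{n=0}^∞ (1/(n!·(n+1)!)) · (z/2)^{2n+1} (the modified Bessel function of the first kind of order one). Then for every real x ≥ 0 and every s > 0, e^{x²/s} = 1 + ∫_0^∞ (x/(2√t)) · e^{t} · I₁(x·√t) · e^{−(1+s/4)·t} dt. -/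
/-!
Expanding `I₁`, the factor `x / (2√t)` turns the Bessel series into the power series
`∑ (x²/4)^(n+1) tⁿ / (n! (n+1)!)`, and `e^t` cancels against `e^{-(1+s/4)t}`. Integrating term by
term with `∫₀^∞ tⁿ e^{-bt} dt = n!/b^(n+1)` (`b = s/4`) leaves `∑ (x²/s)^(n+1)/(n+1)!`, the
exponential series of `x²/s` without its constant term. All terms are nonnegative, so the
interchange of sum and integral is justified by the summability of the integrals.
-/

open MeasureTheory Set
open scoped Nat

lemma integrableOn_pow_mul_exp_neg_mul_Ioi {b : ℝ} (hb : 0 < b) (n : ℕ) :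
    IntegrableOn (fun t : ℝ => t ^ n * Real.exp (-b * t)) (Ioi 0) := by
  refine (integrableOn_rpow_mul_exp_neg_mul_rpow (s := n) (p := 1)
    (neg_one_lt_zero.trans_le n.cast_nonneg) zero_lt_one hb).congr_fun
    (fun t _ => ?_) measurableSet_Ioi
  simp only [Real.rpow_one, Real.rpow_natCast]

lemma integral_pow_mul_exp_neg_mul_Ioi {b : ℝ} (hb : 0 < b) (n : ℕ) :
    ∫ t in Ioi (0 : ℝ), t ^ n * Real.exp (-b * t) = n ! / b ^ (n + 1) := by
  have h := Real.integral_rpow_mul_exp_neg_mul_Ioi (a := n + 1) (by positivity) hb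
  rw [Real.Gamma_nat_eq_factorial, add_sub_cancel_right, ← Nat.cast_succ, Real.rpow_natCast,
    one_div_pow, one_div_mul_eq_div] at h
  simpa only [Real.rpow_natCast, neg_mul] using h

lemma div_two_sqrt_mul_besselI₁_series {x t : ℝ} (ht : 0 < t) :
    x / (2 * √t) * ∑' n : ℕ, 1 / ((n ! : ℝ) * (n + 1)!) * (x * √t / 2) ^ (2 * n + 1)
      = ∑' n : ℕ, (x ^ 2 / 4) ^ (n + 1) / (n ! * (n + 1)!) * t ^ n := by
  rw [← tsum_mul_left]
  refine tsum_congr fun n => ?_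
  have hsqrt : 0 < √t := Real.sqrt_pos.mpr ht
  have hsq : (x * √t / 2) ^ 2 = x ^ 2 / 4 * t := by
    rw [div_pow, mul_pow, Real.sq_sqrt ht.le]
    ring
  rw [pow_succ, pow_mul, hsq, mul_pow]
  field_simp
  ring

lemma integral_pow_series_mul_exp_neg_mul_Ioi {a b : ℝ} (ha : 0 ≤ a) (hb : 0 < b) :
    ∫ t in Ioi (0 : ℝ), (∑' n : ℕ, a ^ (n + 1) / (n ! * (n + 1)!) * t ^ n) * Real.exp (-b * t)
      = Real.exp (a / b) - 1 := by
  set F : ℕ → ℝ → ℝ := fun n t => a ^ (n + 1) / (n ! * (n + 1)!) * (t ^ n * Real.exp (-b * t))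
  have hF_int : ∀ n, IntegrableOn (F n) (Ioi 0) := fun n =>
    (integrableOn_pow_mul_exp_neg_mul_Ioi hb n).const_mul _
  have hF_integral : ∀ n, ∫ t in Ioi (0 : ℝ), F n t = (a / b) ^ (n + 1) / (n + 1)! := by
    intro n
    rw [integral_const_mul, integral_pow_mul_exp_neg_mul_Ioi hb]
    have : (n ! : ℝ) ≠ 0 := by positivity
    rw [div_pow]
    field_simp
  have hF_norm : ∀ n, ∫ t in Ioi (0 : ℝ), ‖F n t‖ = ∫ t in Ioi (0 : ℝ), F n t := fun n =>
    setIntegral_congr_fun measurableSet_Ioi fun t (ht : 0 < t) =>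
      Real.norm_of_nonneg (by positivity)
  have hexp : HasSum (fun n : ℕ => (a / b) ^ (n + 1) / (n + 1)!) (Real.exp (a / b) - 1) := by
    have h := (hasSum_nat_add_iff' 1).mpr (NormedSpace.expSeries_div_hasSum_exp (a / b))
    simpa [← Real.exp_eq_exp_ℝ] using h
  have hsum := hasSum_integral_of_summable_integral_norm hF_int
    (by simpa only [hF_norm, hF_integral] using hexp.summable)
  simp only [hF_integral] at hsum
  rw [hexp.unique hsum]
  refine setIntegral_congr_fun measurableSet_Ioi fun t _ => ?_
  simp only [F, ← mul_assoc, tsum_mul_right]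

theorem statement13_general
    (I₁ : ℝ → ℝ)
    (hI₁ : ∀ z : ℝ, I₁ z = ∑' n : ℕ,
      (1 / ((n.factorial : ℝ) * (n + 1).factorial)) * (z / 2) ^ (2 * n + 1))
    (x s : ℝ) (hs : 0 < s) :
    Real.exp (x ^ 2 / s)
      = 1 + ∫ t in Set.Ioi (0 : ℝ),
          (x / (2 * Real.sqrt t)) * Real.exp t * I₁ (x * Real.sqrt t)
            * Real.exp (-(1 + s / 4) * t) := by
  have hb : 0 < s / 4 := by positivity
  have integrand_eq : ∀ t ∈ Ioi (0 : ℝ),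
      (x / (2 * √t)) * Real.exp t * I₁ (x * √t) * Real.exp (-(1 + s / 4) * t)
        = (∑' n : ℕ, (x ^ 2 / 4) ^ (n + 1) / (n ! * (n + 1)!) * t ^ n)
            * Real.exp (-(s / 4) * t) := by
    intro t ht
    rw [hI₁, ← div_two_sqrt_mul_besselI₁_series ht, mul_right_comm _ (Real.exp t), mul_assoc,
      ← Real.exp_add]
    ring_nf
  rw [setIntegral_congr_fun measurableSet_Ioi integrand_eq,
    integral_pow_series_mul_exp_neg_mul_Ioi (by positivity) hb]
  field_simp
  ring

/-- Bessel identity from Section 2.5: with `I₁` the modified Bessel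
function of the first kind of order one,
`e^{x²/s} = 1 + ∫_0^∞ (x/(2√t)) e^t I₁(x√t) e^{−(1+s/4)t} dt` for `x ≥ 0`, `s > 0`. -/
theorem statement13
    (I₁ : ℝ → ℝ)
    (hI₁ : ∀ z : ℝ, I₁ z = ∑' n : ℕ,
      (1 / ((n.factorial : ℝ) * (n + 1).factorial)) * (z / 2) ^ (2 * n + 1))
    (x s : ℝ) (hx : 0 ≤ x) (hs : 0 < s) :
    Real.exp (x ^ 2 / s)
      = 1 + ∫ t in Set.Ioi (0 : ℝ),
          (x / (2 * Real.sqrt t)) * Real.exp t * I₁ (x * Real.sqrt t)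
            * Real.exp (-(1 + s / 4) * t) :=
  statement13_general I₁ hI₁ x s hs
end

section
/- Let c ≥ 0 be a real number and define the sequence (q_n)_{n≥0} by q_0 := 1 and q_{n+1} := n! · Σ_{j=0}^n c^{j+1} / ( j!·(j+1)!·(n−j)! ) for n ≥ 0. Then for every s > 0, the series Σ_{n=0}^∞ q_n·(1+s/4)^{−n} converges and Σ_{n=0}^∞ q_n·(1+s/4)^{−n} = e^{4c/s}. -/
open Finset

set_option maxHeartbeats 1000000

/-- explicit solution of the generating-function equation (2.27),
Section 2.5: with `q_0 = 1` and `q_{n+1} = n! ∑_{j=0}^n c^{j+1}/(j!(j+1)!(n−j)!)`,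
one has `∑_{n≥0} q_n (1+s/4)^{−n} = e^{4c/s}` for every `s > 0`. -/
theorem statement14 (c : ℝ) (hc : 0 ≤ c) (q : ℕ → ℝ)
    (hq0 : q 0 = 1)
    (hq : ∀ n : ℕ, q (n + 1) = (n.factorial : ℝ) *
      ∑ j ∈ range (n + 1),
        c ^ (j + 1) / ((j.factorial : ℝ) * ((j + 1).factorial : ℝ) * ((n - j).factorial : ℝ))) :
    ∀ s : ℝ, 0 < s →
      HasSum (fun n : ℕ => q n * (1 + s / 4) ^ (-(n : ℤ))) (Real.exp (4 * c / s)) := by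
  intro s hs
  set u : ℝ := (1 + s / 4)⁻¹ with hu_def
  have hs4 : (0 : ℝ) < 1 + s / 4 := by linarith
  have hu0 : 0 < u := inv_pos.mpr hs4
  have hu1 : u < 1 := by
    rw [hu_def, inv_lt_one_iff₀]; right; linarith
  have h1u : 0 < 1 - u := by linarith
  -- the key quantity
  have hx : c * u / (1 - u) = 4 * c / s := by
    have h1u' : 1 - u = (s / 4) / (1 + s / 4) := by
      rw [hu_def]; field_simp; ring
    rw [hu_def, h1u']
    field_simp
  -- the double-indexed family
  set f : ℕ × ℕ → ℝ := fun p =>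
    c ^ p.1 / (p.1.factorial : ℝ) * ((p.2 + p.1 - 1).choose p.2 : ℝ) * u ^ (p.2 + p.1) with hf_def
  have hf_nonneg : ∀ p, 0 ≤ f p := by
    intro p
    apply mul_nonneg (mul_nonneg (div_nonneg (pow_nonneg hc _) (Nat.cast_nonneg _))
      (Nat.cast_nonneg _)) (pow_nonneg hu0.le _)
  -- fiberwise sums over the second coordinate
  have hnorm : ‖u‖ < 1 := by rw [Real.norm_eq_abs, abs_of_pos hu0]; exact hu1
  have hfib : ∀ k : ℕ, HasSum (fun m => f (k, m))
      ((c * u / (1 - u)) ^ k / (k.factorial : ℝ)) := by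
    intro k
    match k with
    | 0 =>
      have : (fun m => f (0, m)) = fun m => if m = 0 then (1 : ℝ) else 0 := by
        funext m
        match m with
        | 0 => simp [hf_def]
        | m + 1 =>
          simp only [hf_def]
          have : (m + 1 + 0 - 1).choose (m + 1) = 0 :=
            Nat.choose_eq_zero_of_lt (by omega)
          simp [this]
      rw [this]
      simpa using hasSum_ite_eq (0 : ℕ) (1 : ℝ)
    | j + 1 =>
      have hgeo := hasSum_choose_mul_geometric_of_norm_lt_one (𝕜 := ℝ) j hnorm
      have := hgeo.mul_left (c ^ (j + 1) / ((j + 1).factorial : ℝ) * u ^ (j + 1))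
      convert this using 1
      · rfl
      · funext m
        simp only [hf_def]
        have h1 : m + (j + 1) - 1 = m + j := by omega
        have h2 : (m + j).choose m = (m + j).choose j := by
          have h3 := Nat.choose_symm (Nat.le_add_left j m)
          rwa [Nat.add_sub_cancel] at h3
        rw [h1, h2, pow_add]
        ring
      · rw [div_pow, mul_pow]
        ring
  -- total sum over ℕ × ℕ
  have hexp : HasSum (fun k : ℕ => (c * u / (1 - u)) ^ k / (k.factorial : ℝ))
      (Real.exp (4 * c / s)) := by
    rw [← hx, Real.exp_eq_exp_ℝ]
    exact NormedSpace.expSeries_div_hasSum_exp (c * u / (1 - u))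
  have hsummable : Summable f := by
    rw [summable_prod_of_nonneg hf_nonneg]
    refine ⟨fun k => (hfib k).summable, ?_⟩
    apply hexp.summable.congr
    intro k
    exact ((hfib k).tsum_eq).symm
  have htot : HasSum f (Real.exp (4 * c / s)) := by
    have := hsummable.hasSum
    rwa [Summable.tsum_prod hsummable, tsum_congr (fun k => (hfib k).tsum_eq),
      hexp.tsum_eq] at this
  -- regroup along antidiagonals
  have hsig : HasSum (fun x : Σ n : ℕ, antidiagonal n => f x.2) (Real.exp (4 * c / s)) :=
    (Finset.HasAntidiagonal.sigmaAntidiagonalEquivProd.hasSum_iff).mpr htot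
  have hdiag : HasSum (fun n : ℕ => ∑ p ∈ antidiagonal n, f p) (Real.exp (4 * c / s)) :=
    hsig.sigma fun n => by
      have h := hasSum_fintype (fun p : antidiagonal n => f p)
      rwa [Finset.sum_coe_sort (antidiagonal n) f] at h
  -- identify the diagonal sums with q n * u ^ n
  have hqn : ∀ n : ℕ, ∑ p ∈ antidiagonal n, f p = q n * u ^ n := by
    intro n
    rw [Finset.Nat.sum_antidiagonal_eq_sum_range_succ_mk]
    have hterm : ∀ k ∈ range (n + 1),
        f (k, n - k) = c ^ k / (k.factorial : ℝ) * ((n - 1).choose (n - k) : ℝ) * u ^ n := by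
      intro k hk
      rw [mem_range] at hk
      simp only [hf_def]
      have h1 : n - k + k = n := by omega
      rw [h1]
    rw [Finset.sum_congr rfl hterm, ← Finset.sum_mul]
    congr 1
    -- ∑_{k≤n} c^k/k! * C(n-1, n-k) = q n
    match n with
    | 0 => simp [hq0]
    | m + 1 =>
      rw [hq m, Finset.sum_range_succ']
      have h0 : c ^ 0 / ((0 : ℕ).factorial : ℝ) * (((m + 1 - 1).choose (m + 1 - 0)) : ℝ) = 0 := by
        have : (m + 1 - 1).choose (m + 1 - 0) = 0 := Nat.choose_eq_zero_of_lt (by omega)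
        simp [this]
      rw [h0, add_zero, Finset.mul_sum]
      apply Finset.sum_congr rfl
      intro j hj
      rw [mem_range] at hj
      have hjm : j ≤ m := by omega
      have h1 : m + 1 - 1 = m := by omega
      have h2 : m + 1 - (j + 1) = m - j := by omega
      rw [h1, h2, Nat.choose_symm hjm, Nat.cast_choose ℝ hjm]
      have hj0 : (j.factorial : ℝ) ≠ 0 := Nat.cast_ne_zero.mpr j.factorial_ne_zero
      have hj1 : ((j + 1).factorial : ℝ) ≠ 0 := Nat.cast_ne_zero.mpr (j + 1).factorial_ne_zero
      have hmj : ((m - j).factorial : ℝ) ≠ 0 := Nat.cast_ne_zero.mpr (m - j).factorial_ne_zero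
      field_simp
  -- conclude
  have hfinal := hdiag
  rw [funext hqn] at hfinal
  have heq : (fun n : ℕ => q n * (1 + s / 4) ^ (-(n : ℤ))) = fun n => q n * u ^ n := by
    funext n
    rw [zpow_neg, zpow_natCast, hu_def, inv_pow]
  rw [heq]
  exact hfinal
end
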